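/- arXiv:1204.1149 — 9 statements merged into one kernel-verified Lean document; each statement's English description precedes it below -/
import Mathlib

section
/- Let ξ_1,…,ξ_n be i.i.d. Bernoulli(p) random variables with 0 < p < 1, q = 1−p, and fix 2 ≤ r ≤ n. For (a,s) with 1 ≤ a,s ≤ n and a+(r−1)s ≤ n, let A_{a,s} be the event {ξ_a = ξ_{a+s} = ⋯ = ξ_{a+(r−1)s} = 1} ∩ ({a ≤ s} ∪ {ξ_{a−s} = 0}), and let I = ∑_{(a,s)} P(A_{a,s}). Then p^r·(n−r)²/(2(r−1)) − p^{r+1}·n²/(2r) ≤ I ≤ p^r·n²/(2(r−1)) − p^{r+1}·(n−r)²/(2r). -/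
open MeasureTheory ProbabilityTheory Finset

/-!
Each event has probability `pʳ - pʳ⁺¹·[s < a]`, and `(a, s) ↦ (a - s, s)` maps the pairs
with `s < a` bijectively onto the progressions of length `r + 1`. Hence
`I = pʳ N_{r-1}(n) - pʳ⁺¹ N_r(n)`, where `N_k(n) = #{(a, s) : a, s ≥ 1, a + k s ≤ n} = ∑ₛ (n - k s)⁺`.
Writing `n = k m + t` with `0 ≤ t < k`, the closed form `N_k(n) = m n - k m (m + 1) / 2` gives
`(n - k)² / (2k) ≤ N_k(n) ≤ n² / (2k)`.
-/

def progressions (n k : ℕ) : Finset (ℕ × ℕ) :=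
  (Icc 1 n ×ˢ Icc 1 n).filter fun q => q.1 + k * q.2 ≤ n

lemma card_progressions (n k : ℕ) : #(progressions n k) = ∑ s ∈ Icc 1 n, (n - k * s) := by
  rw [progressions, card_filter, sum_product_right]
  refine sum_congr rfl fun s _ => ?_
  have hfiber : {a ∈ Icc 1 n | a + k * s ≤ n} = Icc 1 (n - k * s) := by
    ext a
    simp only [mem_filter, mem_Icc]
    omega
  rw [← card_filter, hfiber, Nat.card_Icc, Nat.add_sub_cancel]

lemma card_filter_snd_lt_progressions (n k : ℕ) :
    #{q ∈ progressions n k | q.2 < q.1} = #(progressions n (k + 1)) := by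
  refine card_nbij' (fun q => (q.1 - q.2, q.2)) (fun q => (q.1 + q.2, q.2)) ?_ ?_ ?_ ?_ <;>
  · rintro ⟨a, s⟩ h
    simp only [progressions, coe_filter, mem_filter, mem_product, mem_Icc, Set.mem_ofPred_eq,
      Prod.mk.injEq, add_mul, one_mul] at h ⊢
    lia

lemma sum_Icc_tsub_mul {n k m : ℕ} (hm : k * m ≤ n) :
    ∑ s ∈ Icc 1 m, ((n - k * s : ℕ) : ℝ) = m * n - k * m * (m + 1) / 2 := by
  induction m with
  | zero => simp
  | succ m ih =>
    have hm' : k * m ≤ n := le_trans (Nat.mul_le_mul_left k m.le_succ) hm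
    rw [sum_Icc_succ_top (by omega), ih hm', Nat.cast_sub hm]
    push_cast
    ring

lemma card_progressions_eq {k m t : ℕ} (ht : t < k) :
    (#(progressions (k * m + t) k) : ℝ) = m * (k * m + t : ℕ) - k * m * (m + 1) / 2 := by
  have hm : m ≤ k * m + t := le_add_right (Nat.le_mul_of_pos_left m (by omega))
  rw [card_progressions, Nat.cast_sum, ← sum_Icc_tsub_mul (le_add_right le_rfl)]
  refine (sum_subset (Icc_subset_Icc_right hm) fun s hs hsm => ?_).symm
  simp only [mem_Icc, not_and, not_le] at hs hsm
  have : k * (m + 1) ≤ k * s := Nat.mul_le_mul_left k (hsm hs.1)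
  simp [Nat.sub_eq_zero_of_le (by rw [mul_add_one] at this; omega : k * m + t ≤ k * s)]

lemma card_progressions_le {n k : ℕ} (hk : 0 < k) :
    (#(progressions n k) : ℝ) ≤ (n : ℝ) ^ 2 / (2 * k) := by
  obtain ⟨m, t, ht, rfl⟩ : ∃ m t, t < k ∧ n = k * m + t :=
    ⟨n / k, n % k, Nat.mod_lt n hk, (Nat.div_add_mod n k).symm⟩
  have hk0 : (0 : ℝ) ≤ k := k.cast_nonneg
  have hm0 : (0 : ℝ) ≤ m := m.cast_nonneg
  rw [card_progressions_eq ht, le_div_iff₀ (by positivity)]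
  push_cast
  -- the gap is `t² / (2k) + k m / 2`
  nlinarith [sq_nonneg (t : ℝ), mul_nonneg (mul_nonneg hk0 hk0) hm0]

lemma le_card_progressions {n k : ℕ} (hk : 0 < k) (hkn : k ≤ n) :
    ((n : ℝ) - k) ^ 2 / (2 * k) ≤ #(progressions n k) := by
  obtain ⟨m, t, ht, rfl⟩ : ∃ m t, t < k ∧ n = k * m + t :=
    ⟨n / k, n % k, Nat.mod_lt n hk, (Nat.div_add_mod n k).symm⟩
  have hm : (1 : ℝ) ≤ m := by exact_mod_cast Nat.one_le_iff_ne_zero.2 (by rintro rfl; omega)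
  have hk0 : (0 : ℝ) ≤ k := k.cast_nonneg
  have ht0 : (0 : ℝ) ≤ t := t.cast_nonneg
  have htk : (t : ℝ) ≤ k := by exact_mod_cast ht.le
  rw [card_progressions_eq ht, div_le_iff₀ (by positivity)]
  push_cast
  -- the gap is `k (m - 1) / 2 + t (2k - t) / (2k)`
  nlinarith [mul_nonneg hk0 (sub_nonneg.2 hm), mul_nonneg ht0 (sub_nonneg.2 htk)]

section Bernoulli

variable {Ω ι : Type*} [MeasurableSpace Ω] {μ : Measure Ω} [IsProbabilityMeasure μ] {p : ℝ}

lemma measureReal_forall_eq {ξ : ι → Ω → Bool} (hmeas : ∀ i, Measurable (ξ i))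
    (hindep : iIndepFun ξ μ) (hbern : ∀ i, μ.real {ω | ξ i ω = true} = p)
    (T : Finset ι) (v : ι → Bool) :
    μ.real {ω | ∀ i ∈ T, ξ i ω = v i} = ∏ i ∈ T, if v i then p else 1 - p := by
  have hset : {ω | ∀ i ∈ T, ξ i ω = v i} = ⋂ i ∈ T, {ω | ξ i ω = v i} := by ext; simp
  rw [hset, measureReal_def, hindep.meas_biInter (s := fun i => {ω | ξ i ω = v i})
    fun i _ => ⟨{v i}, measurableSet_singleton _, rfl⟩, ENNReal.toReal_prod]
  refine prod_congr rfl fun i _ => ?_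
  rw [← measureReal_def, ← hbern i]
  cases v i
  · have hcompl : {ω | ξ i ω = false} = {ω | ξ i ω = true}ᶜ := by ext; simp
    have hm : MeasurableSet {ω | ξ i ω = true} := hmeas i (measurableSet_singleton true)
    rw [hcompl, probReal_compl_eq_one_sub hm]
    rfl
  · rfl

variable {ξ : ℕ → Ω → Bool}

lemma measureReal_progression (hmeas : ∀ i, Measurable (ξ i)) (hindep : iIndepFun ξ μ)
    (hbern : ∀ i, μ.real {ω | ξ i ω = true} = p) (r : ℕ) {a s : ℕ} (hs : 0 < s) :
    μ.real {ω | (∀ j < r, ξ (a + j * s) ω = true) ∧ (a ≤ s ∨ ξ (a - s) ω = false)} =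
      if a ≤ s then p ^ r else p ^ r * (1 - p) := by
  set T := (range r).image fun j => a + j * s
  have hinj : Function.Injective fun j => a + j * s := fun i j h => by simpa [hs.ne'] using h
  have hT : #T = r := by rw [card_image_of_injective _ hinj, card_range]
  split_ifs with has
  · simpa [T, has, hT] using measureReal_forall_eq hmeas hindep hbern T fun _ => true
  · have hne : ∀ j, a + j * s ≠ a - s := by omega
    have hnotin : a - s ∉ T := by simpa [T] using fun j _ => hne j
    have hset : {ω | (∀ j < r, ξ (a + j * s) ω = true) ∧ (a ≤ s ∨ ξ (a - s) ω = false)} =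
        {ω | ∀ i ∈ insert (a - s) T, ξ i ω = decide (i ≠ a - s)} := by
      ext ω
      simp only [T, forall_mem_insert, forall_mem_image, mem_range, Set.mem_ofPred_eq, ne_eq,
        hne, has, not_false_eq_true, decide_true, decide_false, not_true_eq_false, false_or,
        and_comm]
    have hprod : ∏ i ∈ T, (if decide (i ≠ a - s) then p else 1 - p) = p ^ r := by
      rw [prod_congr rfl fun i hi => if_pos (decide_eq_true (ne_of_mem_of_not_mem hi hnotin)),
        prod_const, hT]
    rw [hset, measureReal_forall_eq hmeas hindep hbern, prod_insert hnotin, hprod]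
    simp [mul_comm]

lemma sum_measureReal_progressions (hmeas : ∀ i, Measurable (ξ i)) (hindep : iIndepFun ξ μ)
    (hbern : ∀ i, μ.real {ω | ξ i ω = true} = p) (n : ℕ) {r : ℕ} (hr : 1 ≤ r) :
    ∑ q ∈ progressions n (r - 1),
        μ.real {ω | (∀ j < r, ξ (q.1 + j * q.2) ω = true) ∧ (q.1 ≤ q.2 ∨ ξ (q.1 - q.2) ω = false)} =
      p ^ r * #(progressions n (r - 1)) - p ^ (r + 1) * #(progressions n r) := by
  have hterm : ∀ q ∈ progressions n (r - 1),
      μ.real {ω | (∀ j < r, ξ (q.1 + j * q.2) ω = true) ∧ (q.1 ≤ q.2 ∨ ξ (q.1 - q.2) ω = false)} =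
        p ^ r - if q.2 < q.1 then p ^ (r + 1) else 0 := by
    intro q hq
    have hs : 0 < q.2 := by simp only [progressions, mem_filter, mem_product, mem_Icc] at hq; omega
    rw [measureReal_progression hmeas hindep hbern r hs]
    split_ifs <;> first | omega | ring
  rw [sum_congr rfl hterm, sum_sub_distrib, ← sum_filter, sum_const, sum_const,
    card_filter_snd_lt_progressions, Nat.sub_add_cancel hr, nsmul_eq_mul, nsmul_eq_mul]
  ring

end Bernoulli

theorem stmt5_general {Ω : Type*} [MeasurableSpace Ω] (μ : Measure Ω) [IsProbabilityMeasure μ]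
    (p : ℝ) (hp0 : 0 < p) (n r : ℕ) (hr : 2 ≤ r) (hrn : r ≤ n)
    (ξ : ℕ → Ω → Bool) (hmeas : ∀ i, Measurable (ξ i))
    (hindep : iIndepFun ξ μ)
    (hbern : ∀ i, μ {ω | ξ i ω = true} = ENNReal.ofReal p) :
    p ^ r * ((n : ℝ) - r) ^ 2 / (2 * ((r : ℝ) - 1)) - p ^ (r + 1) * (n : ℝ) ^ 2 / (2 * r) ≤
      (∑ q ∈ (Finset.Icc 1 n ×ˢ Finset.Icc 1 n).filter
          (fun q : ℕ × ℕ => q.1 + (r - 1) * q.2 ≤ n),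
        (μ {ω | (∀ j < r, ξ (q.1 + j * q.2) ω = true) ∧
            (q.1 ≤ q.2 ∨ ξ (q.1 - q.2) ω = false)}).toReal) ∧
    (∑ q ∈ (Finset.Icc 1 n ×ˢ Finset.Icc 1 n).filter
          (fun q : ℕ × ℕ => q.1 + (r - 1) * q.2 ≤ n),
        (μ {ω | (∀ j < r, ξ (q.1 + j * q.2) ω = true) ∧
            (q.1 ≤ q.2 ∨ ξ (q.1 - q.2) ω = false)}).toReal) ≤
      p ^ r * (n : ℝ) ^ 2 / (2 * ((r : ℝ) - 1)) - p ^ (r + 1) * ((n : ℝ) - r) ^ 2 / (2 * r) := by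
  have hbern' : ∀ i, μ.real {ω | ξ i ω = true} = p := fun i => by
    rw [measureReal_def, hbern i, ENNReal.toReal_ofReal hp0.le]
  have hI := sum_measureReal_progressions hmeas hindep hbern' n (r := r) (by omega)
  simp only [measureReal_def] at hI
  rw [show (Icc 1 n ×ˢ Icc 1 n).filter (fun q : ℕ × ℕ => q.1 + (r - 1) * q.2 ≤ n) =
    progressions n (r - 1) from rfl, hI]
  have hAlo := le_card_progressions (n := n) (k := r - 1) (by omega) (by omega)
  have hAhi := card_progressions_le (n := n) (k := r - 1) (by omega)
  have hBlo := le_card_progressions (n := n) (k := r) (by omega) hrn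
  have hBhi := card_progressions_le (n := n) (k := r) (by omega)
  rw [Nat.cast_pred (by omega)] at hAlo hAhi
  have hr' : (2 : ℝ) ≤ r := by exact_mod_cast hr
  have hrn' : (r : ℝ) ≤ n := by exact_mod_cast hrn
  simp only [mul_div_assoc]
  constructor
  · gcongr
    exact le_trans (by gcongr <;> linarith) hAlo
  · gcongr

/-- Lemma 3.1: for i.i.d. Bernoulli(p) variables `ξ₁,…,ξₙ` and `2 ≤ r ≤ n`,
with `A_{a,s}` the event that the `r`-term progression starting at `a` with
difference `s` is all ones and is not preceded by a one, and
`I = ∑_{(a,s) ∈ B_n} P(A_{a,s})`, one has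
`pʳ(n−r)²/(2(r−1)) − p^{r+1}n²/(2r) ≤ I ≤ pʳn²/(2(r−1)) − p^{r+1}(n−r)²/(2r)`. -/
theorem stmt5 {Ω : Type*} [MeasurableSpace Ω] (μ : Measure Ω) [IsProbabilityMeasure μ]
    (p : ℝ) (hp0 : 0 < p) (hp1 : p < 1) (n r : ℕ) (hr : 2 ≤ r) (hrn : r ≤ n)
    (ξ : ℕ → Ω → Bool) (hmeas : ∀ i, Measurable (ξ i))
    (hindep : iIndepFun ξ μ)
    (hbern : ∀ i, μ {ω | ξ i ω = true} = ENNReal.ofReal p) :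
    p ^ r * ((n : ℝ) - r) ^ 2 / (2 * ((r : ℝ) - 1)) - p ^ (r + 1) * (n : ℝ) ^ 2 / (2 * r) ≤
      (∑ q ∈ (Finset.Icc 1 n ×ˢ Finset.Icc 1 n).filter
          (fun q : ℕ × ℕ => q.1 + (r - 1) * q.2 ≤ n),
        (μ {ω | (∀ j < r, ξ (q.1 + j * q.2) ω = true) ∧
            (q.1 ≤ q.2 ∨ ξ (q.1 - q.2) ω = false)}).toReal) ∧
    (∑ q ∈ (Finset.Icc 1 n ×ˢ Finset.Icc 1 n).filter
          (fun q : ℕ × ℕ => q.1 + (r - 1) * q.2 ≤ n),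
        (μ {ω | (∀ j < r, ξ (q.1 + j * q.2) ω = true) ∧
            (q.1 ≤ q.2 ∨ ξ (q.1 - q.2) ω = false)}).toReal) ≤
      p ^ r * (n : ℝ) ^ 2 / (2 * ((r : ℝ) - 1)) - p ^ (r + 1) * ((n : ℝ) - r) ^ 2 / (2 * r) :=
  stmt5_general μ p hp0 n r hr hrn ξ hmeas hindep hbern
end

section
/- Fix integers 2 ≤ r ≤ n and let B_n = {(a,s): 1 ≤ a,s ≤ n, a+(r−1)s ≤ n}. For (a,s) ∈ B_n define B_{a,s} = {a, a+s, …, a+(r−1)s} if a ≤ s, and B_{a,s} = {a−s, a, a+s, …, a+(r−1)s} if a > s. Then |{(a,s,b,t) ∈ B_n × B_n : B_{a,s} ∩ B_{b,t} ≠ ∅}| ≤ 9n³/2. -/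
/-- `B_{a,s}` : the `r`-term progression `{a, a+s, …, a+(r−1)s}`, extended by
`a−s` when `a > s`. -/
def progSet (r a s : ℕ) : Finset ℕ :=
  ((Finset.range r).image fun j => a + j * s) ∪ (if s < a then {a - s} else ∅)

/-- `B_n` : pairs `(a,s)` with `1 ≤ a,s ≤ n` and `a+(r−1)s ≤ n`. -/
def Bn (n r : ℕ) : Finset (ℕ × ℕ) :=
  (Finset.Icc 1 n ×ˢ Finset.Icc 1 n).filter fun q : ℕ × ℕ => q.1 + (r - 1) * q.2 ≤ n


/-! If `B_{a,s}` and `B_{b,t}` share an element `x`, then `x + s = a + i s` and `x + t = b + j t`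
with `i, j ≤ r` (index `0` standing for the extra element `a − s`), so `(b,t)` is determined by
`(a,s)`, `i`, `j` and `t ≤ n/(r−1)`: there are at most `|B_n| (r+1)² n/(r−1)` such quadruples.
Moreover `(r−1)|B_n| ≤ n²/2`, because `(a,s) ∈ B_n` together with `k < r−1` yields the pair
`a < a + (r−1)(s−1) + k + 1 ≤ n`, and distinct triples yield distinct pairs. Since
`r + 1 ≤ 3(r−1)`, the count is at most `9n³/2`. -/

open Finset

lemma exists_add_eq_of_mem_progSet {r a s x : ℕ} (hx : x ∈ progSet r a s) :
    ∃ j < r + 1, x + s = a + j * s := by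
  simp only [progSet, mem_union, mem_image, mem_range] at hx
  rcases hx with ⟨j, hj, rfl⟩ | hx
  · exact ⟨j + 1, by omega, by ring⟩
  · split_ifs at hx with hs
    · exact ⟨0, by omega, by simp at hx; omega⟩
    · simp at hx

lemma card_filter_progSet_inter_nonempty_le (r : ℕ) (S : Finset (ℕ × ℕ)) :
    #((S ×ˢ S).filter fun q : (ℕ × ℕ) × ℕ × ℕ =>
        (progSet r q.1.1 q.1.2 ∩ progSet r q.2.1 q.2.2).Nonempty)
      ≤ #S * ((r + 1) * ((r + 1) * #(S.image Prod.snd))) := by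
  let recover : (ℕ × ℕ) × ℕ × ℕ × ℕ → (ℕ × ℕ) × ℕ × ℕ := fun ⟨⟨a, s⟩, i, j, t⟩ =>
    ((a, s), (a + i * s - s + t - j * t, t))
  calc _ ≤ #((S ×ˢ range (r + 1) ×ˢ range (r + 1) ×ˢ S.image Prod.snd).image recover) := by
        refine card_le_card ?_
        rintro ⟨⟨a, s⟩, b, t⟩ hq
        simp only [mem_filter, mem_product] at hq
        obtain ⟨⟨has, hbt⟩, x, hx⟩ := hq
        obtain ⟨i, hi, hxi⟩ := exists_add_eq_of_mem_progSet (mem_inter.1 hx).1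
        obtain ⟨j, hj, hxj⟩ := exists_add_eq_of_mem_progSet (mem_inter.1 hx).2
        refine mem_image.2 ⟨((a, s), i, j, t), ?_, ?_⟩
        · simp only [mem_product, mem_range, mem_image]
          exact ⟨has, hi, hj, ⟨(b, t), hbt, rfl⟩⟩
        · simp only [recover, Prod.mk.injEq, true_and, and_true]
          omega
    _ ≤ _ := card_image_le.trans (by simp only [card_product, card_range, le_refl])

lemma image_snd_Bn_subset {n r : ℕ} (hr : 2 ≤ r) :
    (Bn n r).image Prod.snd ⊆ Icc 1 (n / (r - 1)) := by
  intro t ht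
  simp only [Bn, mem_image, mem_filter, mem_product, mem_Icc] at ht
  obtain ⟨⟨b, t⟩, ⟨⟨⟨hb, -⟩, ht, -⟩, hle⟩, rfl⟩ := ht
  rw [mem_Icc, Nat.le_div_iff_mul_le (by omega)]
  constructor <;> nlinarith

lemma two_mul_card_filter_lt_le {α : Type*} [LinearOrder α] (s : Finset α) :
    2 * #((s ×ˢ s).filter fun p => p.1 < p.2) ≤ #s ^ 2 := by
  set L := (s ×ˢ s).filter fun p => p.1 < p.2
  have hswap : L.image Prod.swap ⊆ (s ×ˢ s).filter fun p => ¬ p.1 < p.2 := by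
    intro p hp
    simp only [L, mem_image, mem_filter, mem_product] at hp ⊢
    obtain ⟨q, ⟨⟨h1, h2⟩, hlt⟩, rfl⟩ := hp
    exact ⟨⟨h2, h1⟩, not_lt.2 hlt.le⟩
  have hle := card_le_card hswap
  rw [card_image_of_injective _ Prod.swap_injective] at hle
  have hsplit := card_filter_add_card_filter_not (s := s ×ˢ s) fun p => p.1 < p.2
  rw [card_product] at hsplit
  nlinarith

lemma sub_one_mul_card_Bn_le (n r : ℕ) :
    (r - 1) * #(Bn n r) ≤ #((Icc 1 n ×ˢ Icc 1 n).filter fun p => p.1 < p.2) := by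
  rw [← card_range (r - 1), ← card_product]
  refine card_le_card_of_injOn (fun ⟨k, a, s⟩ => (a, a + ((r - 1) * (s - 1) + k) + 1)) ?_ ?_
  · rintro ⟨k, a, s⟩ h
    simp only [Bn, mem_coe, mem_product, mem_range, mem_filter, mem_Icc] at h ⊢
    obtain ⟨hk, ⟨⟨ha1, -⟩, hs1, -⟩, hle⟩ := h
    have hmul : (r - 1) * s = (r - 1) * (s - 1) + (r - 1) := by
      rw [← Nat.mul_add_one, Nat.sub_add_cancel hs1]
    omega
  · rintro ⟨k, a, s⟩ h ⟨k', a', s'⟩ h' heq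
    simp only [Bn, mem_coe, mem_product, mem_range, mem_filter, mem_Icc, Prod.mk.injEq]
      at h h' heq ⊢
    obtain ⟨rfl, heq⟩ := heq
    have hd : 0 < r - 1 := by omega
    have hdivmod {k u : ℕ} (hk : k < r - 1) :
        ((r - 1) * u + k) / (r - 1) = u ∧ ((r - 1) * u + k) % (r - 1) = k :=
      (Nat.div_mod_unique hd).2 ⟨add_comm _ _, hk⟩
    have hsum : (r - 1) * (s - 1) + k = (r - 1) * (s' - 1) + k' := by omega
    have hs := hdivmod (u := s - 1) h.1
    rw [hsum, (hdivmod h'.1).1, (hdivmod h'.1).2] at hs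
    omega

theorem stmt6_general (n r : ℕ) (hr : 2 ≤ r) :
    ((((Bn n r ×ˢ Bn n r).filter fun q : (ℕ × ℕ) × ℕ × ℕ =>
        (progSet r q.1.1 q.1.2 ∩ progSet r q.2.1 q.2.2).Nonempty).card : ℝ))
      ≤ 9 * (n : ℝ) ^ 3 / 2 := by
  have hsteps : #((Bn n r).image Prod.snd) ≤ n / (r - 1) := by
    simpa using card_le_card (image_snd_Bn_subset hr)
  have hstarts : 2 * ((r - 1) * #(Bn n r)) ≤ n ^ 2 := by
    refine (Nat.mul_le_mul_left 2 (sub_one_mul_card_Bn_le n r)).trans ?_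
    simpa using two_mul_card_filter_lt_le (Icc 1 n)
  have hr3 : r + 1 ≤ 3 * (r - 1) := by omega
  rw [le_div_iff₀ two_pos, mul_comm]
  exact_mod_cast calc
    2 * _ ≤ 2 * (#(Bn n r) * ((r + 1) * ((r + 1) * (n / (r - 1))))) := by
          gcongr
          exact (card_filter_progSet_inter_nonempty_le r (Bn n r)).trans (by gcongr)
    _ ≤ 2 * (#(Bn n r) * ((3 * (r - 1)) * ((3 * (r - 1)) * (n / (r - 1))))) := by gcongr
    _ = 9 * (2 * ((r - 1) * #(Bn n r)) * ((r - 1) * (n / (r - 1)))) := by ring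
    _ ≤ 9 * (n ^ 2 * n) := by gcongr; exact Nat.mul_div_le n (r - 1)
    _ = 9 * n ^ 3 := by ring

/-- The number of quadruples `(a,s,b,t) ∈ B_n × B_n` with
`B_{a,s} ∩ B_{b,t} ≠ ∅` is at most `9n³/2`. -/
theorem stmt6 (n r : ℕ) (hr : 2 ≤ r) (hrn : r ≤ n) :
    ((((Bn n r ×ˢ Bn n r).filter fun q : (ℕ × ℕ) × ℕ × ℕ =>
        (progSet r q.1.1 q.1.2 ∩ progSet r q.2.1 q.2.2).Nonempty).card : ℝ))
      ≤ 9 * (n : ℝ) ^ 3 / 2 :=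
  stmt6_general n r hr
end

section
/- Fix integers 2 ≤ r ≤ n and define B_{a,s} as the arithmetic progression {a, a+s, …, a+(r−1)s} extended by a−s when a > s. Suppose B_{a,s} ∩ B_{b,t} contains at least two elements, with (a,s),(b,t) ∈ B_n. Then, setting s₀ = s/gcd(s,t) and t₀ = t/gcd(s,t), one has |B_{a,s} ∩ B_{b,t}| ≤ r/max(s₀,t₀) + 1. -/
lemma mem_progSet {r a s x : ℕ} (hx : x ∈ progSet r a s) :
    (∃ j < r, x = a + j * s) ∨ (s < a ∧ x = a - s) := by
  simp only [progSet, Finset.mem_union, Finset.mem_image, Finset.mem_range] at hx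
  rcases hx with ⟨j, hj, rfl⟩ | hx
  · exact Or.inl ⟨j, hj, rfl⟩
  · by_cases h : s < a
    · simp [h] at hx; exact Or.inr ⟨h, hx⟩
    · simp [h] at hx

lemma progSet_mod {r a s x : ℕ} (hx : x ∈ progSet r a s) : x % s = a % s := by
  rcases mem_progSet hx with ⟨j, _, rfl⟩ | ⟨h, rfl⟩
  · simp [Nat.add_mul_mod_self_right]
  · conv_rhs => rw [← Nat.sub_add_cancel h.le]
    simp [Nat.add_mod_right]

lemma progSet_le {r a s x : ℕ} (hr : 1 ≤ r) (hx : x ∈ progSet r a s) :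
    x ≤ a + (r - 1) * s := by
  rcases mem_progSet hx with ⟨j, hj, rfl⟩ | ⟨h, rfl⟩
  · have : j * s ≤ (r - 1) * s := Nat.mul_le_mul_right s (by omega)
    omega
  · omega

lemma progSet_ge {r a s x : ℕ} (hx : x ∈ progSet r a s) : a ≤ x + s := by
  rcases mem_progSet hx with ⟨j, _, rfl⟩ | ⟨h, rfl⟩ <;> omega

lemma progSet_sub_le {r a s x y : ℕ} (hr : 1 ≤ r) (hx : x ∈ progSet r a s)
    (hy : y ∈ progSet r a s) : x - y ≤ r * s := by
  have h1 := progSet_le hr hx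
  have h2 := progSet_ge hy
  have h3 : (r - 1) * s + s = r * s := by
    rw [← Nat.succ_mul, Nat.succ_eq_add_one, Nat.sub_add_cancel hr]
  omega

/-- Counting lemma: a finite set whose pairwise differences are multiples of `d`
and bounded by `D` has at most `D/d + 1` elements. -/
lemma card_le_of_spaced (S : Finset ℕ) (d D : ℕ) (hd : 0 < d)
    (hdvd : ∀ x ∈ S, ∀ y ∈ S, y ≤ x → d ∣ x - y)
    (hD : ∀ x ∈ S, ∀ y ∈ S, x - y ≤ D) : S.card ≤ D / d + 1 := by
  rcases S.eq_empty_or_nonempty with rfl | hne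
  · simp
  set x₀ := S.min' hne with hx₀
  have hx₀S : x₀ ∈ S := S.min'_mem hne
  have hinj : Set.InjOn (fun x => (x - x₀) / d) S := by
    intro x hx y hy hxy
    have hxl : x₀ ≤ x := S.min'_le x hx
    have hyl : x₀ ≤ y := S.min'_le y hy
    have hdx : d ∣ x - x₀ := hdvd x hx x₀ hx₀S hxl
    have hdy : d ∣ y - x₀ := hdvd y hy x₀ hx₀S hyl
    obtain ⟨k, hk⟩ := hdx
    obtain ⟨l, hl⟩ := hdy
    have hkl : k = l := by
      simpa [hk, hl, Nat.mul_div_cancel_left _ hd] using hxy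
    subst hkl
    omega
  have h1 : S.card = (S.image fun x => (x - x₀) / d).card :=
    (Finset.card_image_of_injOn hinj).symm
  have h2 : (S.image fun x => (x - x₀) / d) ⊆ Finset.range (D / d + 1) := by
    intro m hm
    simp only [Finset.mem_image] at hm
    obtain ⟨x, hx, rfl⟩ := hm
    have := hD x hx x₀ hx₀S
    simp only [Finset.mem_range]
    have := Nat.div_le_div_right (c := d) this
    omega
  calc S.card = _ := h1
    _ ≤ (Finset.range (D / d + 1)).card := Finset.card_le_card h2
    _ = D / d + 1 := Finset.card_range _

lemma inter_card_le (r a s b t : ℕ) (hr : 1 ≤ r) (hs : 0 < s) (ht : 0 < t) :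
    (progSet r a s ∩ progSet r b t).card ≤ r / (t / Nat.gcd s t) + 1 := by
  set S := progSet r a s ∩ progSet r b t
  set g := Nat.gcd s t with hg
  have hgpos : 0 < g := Nat.gcd_pos_of_pos_left t hs
  set L := Nat.lcm s t with hL
  have hLpos : 0 < L := Nat.lcm_pos hs ht
  have key : S.card ≤ r * s / L + 1 := by
    apply card_le_of_spaced S L (r * s) hLpos
    · intro x hx y hy hyx
      simp only [S, Finset.mem_inter] at hx hy
      have hms : x % s = y % s := (progSet_mod hx.1).trans (progSet_mod hy.1).symm
      have hmt : x % t = y % t := (progSet_mod hx.2).trans (progSet_mod hy.2).symm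
      have hds : s ∣ x - y := (Nat.modEq_iff_dvd' hyx).mp hms.symm
      have hdt : t ∣ x - y := (Nat.modEq_iff_dvd' hyx).mp hmt.symm
      exact Nat.lcm_dvd hds hdt
    · intro x hx y hy
      simp only [S, Finset.mem_inter] at hx hy
      exact progSet_sub_le hr hx.1 hy.1
  have hLs : L = s * (t / g) := by
    rw [hL, Nat.lcm, ← hg, Nat.mul_div_assoc s (Nat.gcd_dvd_right s t)]
  have : r * s / L = r / (t / g) := by
    rw [hLs, Nat.mul_comm r s, Nat.mul_div_mul_left _ _ hs]
  omega

/-- If `(a,s),(b,t) ∈ B_n` and `|B_{a,s} ∩ B_{b,t}| ≥ 2` then, with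
`s₀ = s/gcd(s,t)` and `t₀ = t/gcd(s,t)`,
`|B_{a,s} ∩ B_{b,t}| ≤ r/max(s₀,t₀) + 1`. -/
theorem stmt7 (n r : ℕ) (hr : 2 ≤ r) (hrn : r ≤ n) (a s b t : ℕ)
    (ha : (a, s) ∈ Bn n r) (hb : (b, t) ∈ Bn n r)
    (hcard : 2 ≤ (progSet r a s ∩ progSet r b t).card) :
    ((progSet r a s ∩ progSet r b t).card : ℝ) ≤
      (r : ℝ) / (max (s / Nat.gcd s t) (t / Nat.gcd s t) : ℕ) + 1 := by
  simp only [Bn, Finset.mem_filter, Finset.mem_product, Finset.mem_Icc] at ha hb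
  have hs : 0 < s := ha.1.2.1
  have ht : 0 < t := hb.1.2.1
  have hr1 : 1 ≤ r := by omega
  have h1 : (progSet r a s ∩ progSet r b t).card ≤ r / (t / Nat.gcd s t) + 1 :=
    inter_card_le r a s b t hr1 hs ht
  have h2 : (progSet r a s ∩ progSet r b t).card ≤ r / (s / Nat.gcd s t) + 1 := by
    have := inter_card_le r b t a s hr1 ht hs
    rwa [Finset.inter_comm, Nat.gcd_comm t s] at this
  set m := max (s / Nat.gcd s t) (t / Nat.gcd s t) with hm
  have hnat : (progSet r a s ∩ progSet r b t).card ≤ r / m + 1 := by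
    rcases max_cases (s / Nat.gcd s t) (t / Nat.gcd s t) with ⟨he, _⟩ | ⟨he, _⟩ <;>
      rw [hm, he]
    · exact h2
    · exact h1
  calc ((progSet r a s ∩ progSet r b t).card : ℝ) ≤ ((r / m + 1 : ℕ) : ℝ) := by
        exact_mod_cast hnat
    _ = ((r / m : ℕ) : ℝ) + 1 := by push_cast; ring
    _ ≤ (r : ℝ) / (m : ℕ) + 1 := by
        have := Nat.cast_div_le (α := ℝ) (m := r) (n := m)
        linarith
end

section
/- Let ξ_1,…,ξ_n be Bernoulli random variables, 2 ≤ r ≤ n, and define W^{(n)} as the longest length of an arithmetic progression mod n on which all ξ_i equal 1. Let Ã_{a,s} = {ξ_a = 0, ξ_{a+s mod n} = 1, …, ξ_{a+rs mod n} = 1}, B̃_n = {(a,s): 1 ≤ a ≤ n, 1 ≤ s ≤ ⌊n/2⌋, gcd(n,s) < n/r}, A₁ = ⋃_{(a,s)∈B̃_n} Ã_{a,s}, and A₂ = ⋃_{s|n, s ≤ n/r, 1 ≤ a ≤ s} {ξ_i = 1 for all i ∈ C_{a,s}}. Then {W^{(n)} ≥ r} = A₁ ∪ A₂. -/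
/-- Residue of `x` mod `n` taken in `{1,…,n}`. -/
def amod (x n : ℕ) : ℕ := if x % n = 0 then n else x % n

/-- The cycle `C_{a,s} = {a, a+s mod n, …, a+(n/gcd(s,n)−1)s mod n}`. -/
def cyc (n a s : ℕ) : Finset ℕ :=
  (Finset.range (n / Nat.gcd s n)).image fun k => amod (a + k * s) n

/-- `W^{(n)}_{a,s}` : the longest initial run of ones along the progression
mod `n` starting at `a` with difference `s` (0 if `ξ_a = 0`). -/
def Wlen {Ω : Type*} (ξ : ℕ → Ω → Bool) (n a s : ℕ) (ω : Ω) : ℕ :=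
  (Finset.Icc 1 (n / Nat.gcd s n)).sup fun m =>
    if ∀ j < m, ξ (amod (a + j * s) n) ω = true then m else 0

/-- `W^{(n)}` : the longest length of arithmetic progressions mod `n`. -/
def W {Ω : Type*} (ξ : ℕ → Ω → Bool) (n : ℕ) (ω : Ω) : ℕ :=
  ((Finset.Icc 1 n) ×ˢ (Finset.Icc 1 n)).sup fun q => Wlen ξ n q.1 q.2 ω

lemma amod_one_le {n : ℕ} (hn : 0 < n) (x : ℕ) : 1 ≤ amod x n := by
  unfold amod; split <;> omega

lemma amod_le {n : ℕ} (hn : 0 < n) (x : ℕ) : amod x n ≤ n := by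
  have h := Nat.mod_lt x hn
  unfold amod; split
  · exact le_rfl
  · exact le_of_lt h

lemma amod_mod {n : ℕ} (hn : 0 < n) (x : ℕ) : amod x n % n = x % n := by
  have h := Nat.mod_lt x hn
  unfold amod; split
  · next h2 => rw [Nat.mod_self, h2]
  · exact Nat.mod_eq_of_lt h

lemma amod_congr {n x y : ℕ} (h : x % n = y % n) : amod x n = amod y n := by
  unfold amod; rw [h]

lemma amod_add {n : ℕ} (hn : 0 < n) (x y : ℕ) :
    amod (amod x n + y) n = amod (x + y) n :=
  amod_congr (by rw [Nat.add_mod, amod_mod hn, ← Nat.add_mod])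

lemma gcd_div_mul_eq (n s : ℕ) (hd0 : 0 < Nat.gcd s n) :
    (n / Nat.gcd s n) * s = n * (s / Nat.gcd s n) := by
  apply Nat.eq_of_mul_eq_mul_left hd0
  rw [← mul_assoc, Nat.mul_div_cancel' (Nat.gcd_dvd_right s n), ← mul_assoc,
    mul_comm (Nat.gcd s n) n, mul_assoc, Nat.mul_div_cancel' (Nat.gcd_dvd_left s n)]

lemma hit (n s a x : ℕ) (hn : 0 < n) (hx : x % Nat.gcd s n = a % Nat.gcd s n) :
    ∃ k < n / Nat.gcd s n, (a + k * s) % n = x % n := by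
  set d := Nat.gcd s n with hd
  have hds : d ∣ s := Nat.gcd_dvd_left s n
  have hdn : d ∣ n := Nat.gcd_dvd_right s n
  have hd0 : 0 < d := Nat.gcd_pos_of_pos_right s hn
  have hL0 : 0 < n / d := Nat.div_pos (Nat.le_of_dvd hn hdn) hd0
  have hbez : (d : ℤ) = s * Nat.gcdA s n + n * Nat.gcdB s n := Nat.gcd_eq_gcd_ab s n
  have h1 : ((x : ℤ)) % (d : ℤ) = (a : ℤ) % (d : ℤ) := by exact_mod_cast hx
  have hme : (x : ℤ) ≡ (a : ℤ) [ZMOD (d : ℤ)] := h1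
  obtain ⟨c, hc⟩ : (d : ℤ) ∣ (x : ℤ) - a := (hme.symm).dvd
  set w : ℤ := c * Nat.gcdA s n with hw
  set k0 : ℕ := (w % n).toNat with hk0
  have hk0' : (k0 : ℤ) = w % n := Int.toNat_of_nonneg (Int.emod_nonneg w (by exact_mod_cast hn.ne'))
  set k : ℕ := k0 % (n / d) with hk
  refine ⟨k, Nat.mod_lt _ hL0, ?_⟩
  have hLs : ((n / d) * s : ℕ) = n * (s / d) := gcd_div_mul_eq n s hd0
  have hz : ((n / d : ℕ) : ZMod n) * (s : ZMod n) = 0 := by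
    have h2 : (((n / d) * s : ℕ) : ZMod n) = 0 := by
      rw [hLs]; push_cast [ZMod.natCast_self]; ring
    push_cast at h2; exact h2
  have he : k0 = (n / d) * (k0 / (n / d)) + k := by
    rw [hk]; exact (Nat.div_add_mod k0 (n / d)).symm
  have hkk0 : (k : ZMod n) * s = (k0 : ZMod n) * s := by
    calc (k : ZMod n) * s
        = 0 * ((k0 / (n / d) : ℕ) : ZMod n) + (k : ZMod n) * s := by ring
      _ = ((n / d : ℕ) : ZMod n) * s * ((k0 / (n / d) : ℕ) : ZMod n) + (k : ZMod n) * s := by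
          rw [hz]
      _ = (((n / d) * (k0 / (n / d)) + k : ℕ) : ZMod n) * s := by push_cast; ring
      _ = (k0 : ZMod n) * s := by rw [← he]
  have hk0w : ((k0 : ℕ) : ZMod n) = ((w : ℤ) : ZMod n) := by
    have h4 : ((k0 : ℤ) : ZMod n) = ((w % n : ℤ) : ZMod n) := by rw [hk0']
    rw [Int.cast_natCast] at h4
    rw [h4, ZMod.intCast_eq_intCast_iff]
    exact Int.emod_emod_of_dvd w dvd_rfl
  have hws : ((w : ℤ) : ZMod n) * (s : ZMod n) = (x : ZMod n) - (a : ZMod n) := by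
    have hsu : ((s : ℤ)) * (Nat.gcdA s n) = (d : ℤ) - n * Nat.gcdB s n := by linarith [hbez]
    have h5 : (w * s : ℤ) = ((x : ℤ) - a) - c * (n * Nat.gcdB s n) := by
      rw [hw, mul_assoc, mul_comm ((Nat.gcdA s n : ℤ)) (s : ℤ), hsu, hc]; ring
    have h3 : ((w * s : ℤ) : ZMod n) = (((x : ℤ) - a : ℤ) : ZMod n) := by
      rw [h5]; push_cast [ZMod.natCast_self]; ring
    push_cast at h3 ⊢
    rw [← h3]
  have key : ((a + k * s : ℕ) : ZMod n) = ((x : ℕ) : ZMod n) := by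
    push_cast
    rw [hkk0, hk0w, hws]; ring
  exact (ZMod.natCast_eq_natCast_iff _ _ _).mp key

lemma wlen_ge {Ω : Type*} (ξ : ℕ → Ω → Bool) (n a s r : ℕ) (ω : Ω)
    (hr1 : 1 ≤ r) (hrL : r ≤ n / Nat.gcd s n)
    (hrun : ∀ j < r, ξ (amod (a + j * s) n) ω = true) : r ≤ Wlen ξ n a s ω := by
  have h := Finset.le_sup
    (f := fun m => if ∀ j < m, ξ (amod (a + j * s) n) ω = true then m else 0)
    (Finset.mem_Icc.mpr ⟨hr1, hrL⟩)
  unfold Wlen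
  refine le_trans ?_ h
  beta_reduce
  rw [if_pos hrun]

lemma ge_wlen {Ω : Type*} {ξ : ℕ → Ω → Bool} {n a s r : ℕ} {ω : Ω}
    (hr : 1 ≤ r) (h : r ≤ Wlen ξ n a s ω) :
    r ≤ n / Nat.gcd s n ∧ ∀ j < r, ξ (amod (a + j * s) n) ω = true := by
  rw [Wlen, Finset.le_sup_iff (show (⊥ : ℕ) < r from hr)] at h
  obtain ⟨m, hm, hle⟩ := h
  rw [Finset.mem_Icc] at hm
  split_ifs at hle with hrun
  · exact ⟨le_trans hle hm.2, fun j hj => hrun j (lt_of_lt_of_le hj hle)⟩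
  · omega

lemma ge_W {Ω : Type*} {ξ : ℕ → Ω → Bool} {n r : ℕ} {ω : Ω}
    (hr : 1 ≤ r) (h : r ≤ W ξ n ω) :
    ∃ a s, 1 ≤ a ∧ a ≤ n ∧ 1 ≤ s ∧ s ≤ n ∧ r ≤ Wlen ξ n a s ω := by
  rw [W, Finset.le_sup_iff (show (⊥ : ℕ) < r from hr)] at h
  obtain ⟨q, hq, hle⟩ := h
  rw [Finset.mem_product, Finset.mem_Icc, Finset.mem_Icc] at hq
  exact ⟨q.1, q.2, hq.1.1, hq.1.2, hq.2.1, hq.2.2, hle⟩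

lemma W_ge {Ω : Type*} {ξ : ℕ → Ω → Bool} {n r a s : ℕ} {ω : Ω}
    (ha1 : 1 ≤ a) (han : a ≤ n) (hs1 : 1 ≤ s) (hsn : s ≤ n)
    (h : r ≤ Wlen ξ n a s ω) : r ≤ W ξ n ω := by
  have h2 := Finset.le_sup (f := fun q : ℕ × ℕ => Wlen ξ n q.1 q.2 ω)
    (s := (Finset.Icc 1 n) ×ˢ (Finset.Icc 1 n))
    (show (a, s) ∈ (Finset.Icc 1 n) ×ˢ (Finset.Icc 1 n) from
      Finset.mem_product.mpr ⟨Finset.mem_Icc.mpr ⟨ha1, han⟩, Finset.mem_Icc.mpr ⟨hs1, hsn⟩⟩)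
  exact le_trans h h2

/-- Lemma 4.1: `{W^{(n)} ≥ r} = A₁ ∪ A₂`, where `A₁` is the union of the events
`Ã_{a,s} = {ξ_a = 0, ξ_{a+s mod n} = 1, …, ξ_{a+rs mod n} = 1}` over
`(a,s)` with `1 ≤ a ≤ n`, `1 ≤ s ≤ ⌊n/2⌋`, `gcd(n,s) < n/r`, and `A₂` is the
union over `s ∣ n`, `s ≤ n/r`, `1 ≤ a ≤ s` of `{ξ_i = 1 ∀ i ∈ C_{a,s}}`. -/
theorem stmt11 {Ω : Type*} (ξ : ℕ → Ω → Bool) (n r : ℕ) (hr : 2 ≤ r) (hrn : r ≤ n) :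
    {ω | r ≤ W ξ n ω} =
      {ω | ∃ a s : ℕ, 1 ≤ a ∧ a ≤ n ∧ 1 ≤ s ∧ 2 * s ≤ n ∧ Nat.gcd n s * r < n ∧
          ξ a ω = false ∧ ∀ j : ℕ, 1 ≤ j → j ≤ r → ξ (amod (a + j * s) n) ω = true} ∪
      {ω | ∃ s a : ℕ, s ∣ n ∧ s * r ≤ n ∧ 1 ≤ a ∧ a ≤ s ∧
          ∀ i ∈ cyc n a s, ξ i ω = true} := by
  have hn : 0 < n := by omega
  ext ω
  simp only [Set.mem_setOf_eq, Set.mem_union]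
  constructor
  · intro hW
    obtain ⟨a, s, ha1, han, hs1, hsn, hWlen⟩ := ge_W (by omega) hW
    obtain ⟨hrL, hrun⟩ := ge_wlen (by omega : (1:ℕ) ≤ r) hWlen
    set d := Nat.gcd s n with hd
    have hds : d ∣ s := Nat.gcd_dvd_left s n
    have hdn : d ∣ n := Nat.gcd_dvd_right s n
    have hd0 : 0 < d := Nat.gcd_pos_of_pos_right s hn
    have hdL : d * (n / d) = n := Nat.mul_div_cancel' hdn
    by_cases hall : ∀ i ∈ cyc n a s, ξ i ω = true
    · right
      refine ⟨d, amod a d, hdn, ?_, amod_one_le hd0 a, amod_le hd0 a, ?_⟩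
      · calc d * r ≤ d * (n / d) := Nat.mul_le_mul_left d hrL
          _ = n := hdL
      · intro i hi
        rw [cyc, Finset.mem_image] at hi
        obtain ⟨k, hk, rfl⟩ := hi
        rw [Finset.mem_range, Nat.gcd_eq_left hdn] at hk
        have hx : (amod a d + k * d) % d = a % d := by
          rw [Nat.add_mul_mod_self_right, amod_mod hd0]
        obtain ⟨k', hk', hk'e⟩ := hit n s a (amod a d + k * d) hn hx
        apply hall
        rw [cyc, Finset.mem_image]
        exact ⟨k', Finset.mem_range.mpr hk', amod_congr hk'e⟩
    · left
      push_neg at hall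
      obtain ⟨i0, hi0mem, hi0⟩ := hall
      rw [cyc, Finset.mem_image] at hi0mem
      obtain ⟨k0, hk0, rfl⟩ := hi0mem
      rw [Finset.mem_range, ← hd] at hk0
      have hL0 : 0 < n / d := Nat.div_pos (Nat.le_of_dvd hn hdn) hd0
      have hi0' : ξ (amod (a + k0 * s) n) ω = false := by
        cases hb : ξ (amod (a + k0 * s) n) ω
        · rfl
        · exact absurd hb hi0
      have hk0r : r ≤ k0 := by
        by_contra hlt
        push_neg at hlt
        rw [hrun k0 hlt] at hi0'
        exact Bool.noConfusion hi0'
      have hrL' : r < n / d := lt_of_le_of_lt hk0r hk0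
      have hLs : ((n / d) * s : ℕ) = n * (s / d) := gcd_div_mul_eq n s hd0
      have hper : ∀ k, amod (a + (k + (n / d)) * s) n = amod (a + k * s) n := by
        intro k
        apply amod_congr
        have e : a + (k + n / d) * s = a + k * s + n * (s / d) := by
          rw [add_mul, hLs]; ring
        rw [e, Nat.add_mul_mod_self_left]
      by_cases hsle : 2 * s ≤ n
      · -- use max zero
        set P : ℕ → Prop := fun k => r ≤ k ∧ ξ (amod (a + k * s) n) ω = false with hP
        have hPk0 : P k0 := ⟨hk0r, hi0'⟩
        set z := Nat.findGreatest P (n / d - 1) with hz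
        have hspec : P z := Nat.findGreatest_spec (show k0 ≤ n / d - 1 by omega) hPk0
        have hzle : z ≤ n / d - 1 := Nat.findGreatest_le _
        refine ⟨amod (a + z * s) n, s, amod_one_le hn _, amod_le hn _, hs1, hsle, ?_,
          hspec.2, ?_⟩
        · rw [Nat.gcd_comm, ← hd]
          calc d * r < d * (n / d) := mul_lt_mul_of_pos_left hrL' hd0
            _ = n := hdL
        · intro j hj1 hjr
          rw [amod_add hn]
          have e : a + z * s + j * s = a + (z + j) * s := by ring
          rw [e]
          by_cases hzj : z + j ≤ n / d - 1
          · cases hb : ξ (amod (a + (z + j) * s) n) ω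
            · exfalso
              have : ¬ P (z + j) := Nat.findGreatest_is_greatest (by omega) hzj
              exact this ⟨by omega, hb⟩
            · rfl
          · have hwrap : z + j = (z + j - n / d) + n / d := by omega
            rw [hwrap, hper]
            exact hrun _ (by omega)
      · -- use min zero, reversed direction
        push_neg at hsle
        have hsn' : s < n := by
          rcases lt_or_eq_of_le hsn with h | h
          · exact h
          · exfalso
            have : d = n := by rw [hd, h]; exact Nat.gcd_self n
            rw [this, Nat.div_self hn] at hrL
            omega
        have hQ : ∃ k, r ≤ k ∧ ξ (amod (a + k * s) n) ω = false := ⟨k0, hk0r, hi0'⟩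
        set z := Nat.find hQ with hzdef
        have hspec := Nat.find_spec hQ
        have hzk0 : z ≤ k0 := Nat.find_min' hQ ⟨hk0r, hi0'⟩
        refine ⟨amod (a + z * s) n, n - s, amod_one_le hn _, amod_le hn _, by omega,
          by omega, ?_, hspec.2, ?_⟩
        · have hg : Nat.gcd n (n - s) = d := by
            have e1 : Nat.gcd n (n - s) = Nat.gcd n s := by
              apply Nat.dvd_antisymm
              · apply Nat.dvd_gcd (Nat.gcd_dvd_left _ _)
                have h1 : Nat.gcd n (n - s) ∣ n := Nat.gcd_dvd_left _ _
                have h2 : Nat.gcd n (n - s) ∣ n - s := Nat.gcd_dvd_right _ _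
                have h3 := Nat.dvd_sub h1 h2
                rwa [Nat.sub_sub_self (le_of_lt hsn')] at h3
              · exact Nat.dvd_gcd (Nat.gcd_dvd_left _ _)
                  (Nat.dvd_sub (Nat.gcd_dvd_left n s) (Nat.gcd_dvd_right n s))
            rw [e1, Nat.gcd_comm, ← hd]
          rw [hg]
          calc d * r < d * (n / d) := mul_lt_mul_of_pos_left hrL' hd0
            _ = n := hdL
        · intro j hj1 hjr
          rw [amod_add hn]
          have hjz : j ≤ z := le_trans hjr hspec.1
          have e : a + z * s + j * (n - s) = a + (z - j) * s + j * n := by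
            have e1 : z * s = (z - j) * s + j * s := by
              rw [← add_mul]; congr 1; omega
            have e2 : j * s + j * (n - s) = j * n := by
              rw [← mul_add]; congr 1; omega
            calc a + z * s + j * (n - s)
                = a + ((z - j) * s + j * s) + j * (n - s) := by rw [← e1]
              _ = a + (z - j) * s + (j * s + j * (n - s)) := by ring
              _ = a + (z - j) * s + j * n := by rw [e2]
          rw [e]
          have e3 : amod (a + (z - j) * s + j * n) n = amod (a + (z - j) * s) n :=
            amod_congr (Nat.add_mul_mod_self_right _ _ _)
          rw [e3]
          by_cases hzr : z - j < r
          · exact hrun _ hzr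
          · cases hb : ξ (amod (a + (z - j) * s) n) ω
            · exfalso
              have : ¬ (r ≤ z - j ∧ ξ (amod (a + (z - j) * s) n) ω = false) :=
                Nat.find_min hQ (by omega)
              exact this ⟨by omega, hb⟩
            · rfl
  · intro h
    rcases h with ⟨a, s, ha1, han, hs1, hsle, hgcd, _, hones⟩ | ⟨s, a, hsdvd, hsr, ha1, has, hall⟩
    · set d := Nat.gcd s n with hd
      have hdn : d ∣ n := Nat.gcd_dvd_right s n
      have hd0 : 0 < d := Nat.gcd_pos_of_pos_right s hn
      have hdr : d * r < n := by rwa [Nat.gcd_comm n s, ← hd] at hgcd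
      have hrL : r ≤ n / d := by
        have h1 : d * r < d * (n / d) := by rwa [Nat.mul_div_cancel' hdn]
        exact le_of_lt (lt_of_mul_lt_mul_left h1 (Nat.zero_le d))
      apply W_ge (amod_one_le hn (a + s)) (amod_le hn (a + s)) hs1 (by omega)
      apply wlen_ge ξ n _ s r ω (by omega) hrL
      intro j hj
      rw [amod_add hn]
      have e : a + s + j * s = a + (1 + j) * s := by ring
      rw [e]
      exact hones (1 + j) (by omega) (by omega)
    · have hs0 : 0 < s := by omega
      have hgs : Nat.gcd s n = s := Nat.gcd_eq_left hsdvd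
      have hrL : r ≤ n / Nat.gcd s n := by
        rw [hgs]
        rw [Nat.le_div_iff_mul_le hs0, mul_comm]
        exact hsr
      apply W_ge ha1 (le_trans has (Nat.le_of_dvd hn hsdvd)) hs0
        (Nat.le_of_dvd hn hsdvd)
      apply wlen_ge ξ n a s r ω (by omega) hrL
      intro j hj
      apply hall
      rw [cyc, Finset.mem_image]
      exact ⟨j, Finset.mem_range.mpr (by omega), rfl⟩
end

section
/- Let ξ_1,…,ξ_n be i.i.d. Bernoulli(p) with 0 < p < 1 and fix 2 ≤ r ≤ n. With A₂ = ⋃_{s|n, s ≤ n/r, 1 ≤ a ≤ s} {ξ_i = 1 for all i ∈ C_{a,s}}, one has P(A₂) ≤ n·p^r/(q·r), where q = 1−p. -/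
/-!
Union bound: `C_{a,s}` has `n / s` elements, so each of the `s` events with a given `s` has
probability `p ^ (n / s)`, and `P(A₂) ≤ ∑_s s p^(n/s) ≤ (n / r) ∑_s p^(n/s)`. Since `s ↦ n / s`
is injective on the divisors of `n` and lands in `[r, n]`, the last sum is at most the geometric
tail `∑_{m ≥ r} p^m = p^r / q`.
-/

open MeasureTheory ProbabilityTheory

open Finset

lemma amod_eq_self {x n : ℕ} (h1 : 1 ≤ x) (h2 : x ≤ n) : amod x n = x := by
  rcases h2.eq_or_lt with rfl | h
  · simp [amod]
  · rw [amod, Nat.mod_eq_of_lt h, if_neg (by omega)]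

-- For `1 ≤ a ≤ s ∣ n` the terms `a + k * s` stay in `[1, n]`, so no reduction mod `n` happens.
lemma card_cyc {n a s : ℕ} (hs : s ∣ n) (ha : 1 ≤ a) (has : a ≤ s) :
    #(cyc n a s) = n / s := by
  have hs0 : 0 < s := ha.trans has
  have hterm : ∀ k < n / s, amod (a + k * s) n = a + k * s := fun k hk ↦ by
    have : (k + 1) * s ≤ n := (Nat.mul_le_mul_right s hk).trans (Nat.div_mul_le_self n s)
    exact amod_eq_self (by omega) (by nlinarith)
  rw [cyc, Nat.gcd_eq_left hs, card_image_of_injOn, card_range]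
  intro k hk l hl hkl
  rw [coe_range, Set.mem_Iio] at hk hl
  simp only [hterm k hk, hterm l hl] at hkl
  exact Nat.eq_of_mul_eq_mul_right hs0 (by omega)

lemma measureReal_forall_eq_true {Ω ι : Type*} [MeasurableSpace Ω] {μ : Measure Ω}
    {p : ℝ} (hp : 0 ≤ p) {ξ : ι → Ω → Bool} (hindep : iIndepFun ξ μ)
    (hbern : ∀ i, μ {ω | ξ i ω = true} = ENNReal.ofReal p) (T : Finset ι) :
    μ.real {ω | ∀ i ∈ T, ξ i ω = true} = p ^ #T := by
  have hinter : {ω | ∀ i ∈ T, ξ i ω = true} = ⋂ i ∈ T, ξ i ⁻¹' {true} := by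
    ext ω; simp
  rw [measureReal_def, hinter,
    hindep.meas_biInter fun i _ ↦ ⟨{true}, trivial, rfl⟩]
  simp_rw [Set.preimage, Set.mem_singleton_iff, hbern, prod_const,
    ENNReal.toReal_pow, ENNReal.toReal_ofReal hp]

lemma sum_divisors_pow_div_le {p : ℝ} (hp0 : 0 ≤ p) (hp1 : p < 1) (n r : ℕ) :
    ∑ s ∈ n.divisors with s * r ≤ n, p ^ (n / s) ≤ p ^ r / (1 - p) := by
  have hinj : Set.InjOn (n / ·) (n.divisors.filter (· * r ≤ n) : Set ℕ) := by
    intro s hs t ht hst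
    simp only [coe_filter, Nat.mem_divisors, Set.mem_ofPred_eq] at hs ht
    rw [← Nat.div_div_self hs.1.1 hs.1.2, ← Nat.div_div_self ht.1.1 ht.1.2]
    exact congrArg (n / ·) hst
  have hsub : (n.divisors.filter (· * r ≤ n)).image (n / ·) ⊆ Ico r (n + 1) := by
    simp only [subset_iff, mem_image, mem_filter, Nat.mem_divisors, mem_Ico]
    rintro _ ⟨s, ⟨⟨hsn, hn⟩, hsr⟩, rfl⟩
    have hs0 : 0 < s := Nat.pos_of_dvd_of_pos hsn (Nat.pos_of_ne_zero hn)
    exact ⟨(Nat.le_div_iff_mul_le hs0).2 (by linarith), Nat.lt_succ_of_le (Nat.div_le_self n s)⟩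
  calc ∑ s ∈ n.divisors with s * r ≤ n, p ^ (n / s)
      = ∑ m ∈ (n.divisors.filter (· * r ≤ n)).image (n / ·), p ^ m := (sum_image hinj).symm
    _ ≤ ∑ m ∈ Ico r (n + 1), p ^ m :=
        sum_le_sum_of_subset_of_nonneg hsub fun _ _ _ ↦ pow_nonneg hp0 _
    _ ≤ p ^ r / (1 - p) := geom_sum_Ico_le_of_lt_one hp0 hp1

lemma sum_divisors_mul_pow_div_le {p : ℝ} (hp0 : 0 ≤ p) (hp1 : p < 1) (n : ℕ) {r : ℕ}
    (hr : 0 < r) :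
    ∑ s ∈ n.divisors with s * r ≤ n, (s : ℝ) * p ^ (n / s) ≤ n * p ^ r / ((1 - p) * r) := by
  have hs : ∀ s ∈ n.divisors.filter (· * r ≤ n), (s : ℝ) ≤ n / r := fun s hs ↦ by
    rw [le_div_iff₀ (by positivity)]
    exact_mod_cast (mem_filter.1 hs).2
  calc ∑ s ∈ n.divisors with s * r ≤ n, (s : ℝ) * p ^ (n / s)
      ≤ ∑ s ∈ n.divisors with s * r ≤ n, (n / r : ℝ) * p ^ (n / s) :=
        sum_le_sum fun s h ↦ mul_le_mul_of_nonneg_right (hs s h) (pow_nonneg hp0 _)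
    _ ≤ (n / r : ℝ) * (p ^ r / (1 - p)) := by
        rw [← mul_sum]
        exact mul_le_mul_of_nonneg_left (sum_divisors_pow_div_le hp0 hp1 n r) (by positivity)
    _ = n * p ^ r / ((1 - p) * r) := by field_simp

theorem stmt12_general {Ω : Type*} [MeasurableSpace Ω] (μ : Measure Ω) [IsProbabilityMeasure μ]
    (p : ℝ) (hp0 : 0 < p) (hp1 : p < 1) (n r : ℕ) (hr : 2 ≤ r)
    (ξ : ℕ → Ω → Bool)
    (hindep : iIndepFun ξ μ)
    (hbern : ∀ i, μ {ω | ξ i ω = true} = ENNReal.ofReal p) :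
    (μ {ω | ∃ s a : ℕ, s ∣ n ∧ s * r ≤ n ∧ 1 ≤ a ∧ a ≤ s ∧
        ∀ i ∈ cyc n a s, ξ i ω = true}).toReal ≤
      (n : ℝ) * p ^ r / ((1 - p) * r) := by
  set C : ℕ → ℕ → Set Ω := fun s a ↦ {ω | ∀ i ∈ cyc n a s, ξ i ω = true}
  have hcover : {ω | ∃ s a : ℕ, s ∣ n ∧ s * r ≤ n ∧ 1 ≤ a ∧ a ≤ s ∧ ω ∈ C s a} ⊆
      ⋃ s ∈ n.divisors.filter (· * r ≤ n), ⋃ a ∈ Icc 1 s, C s a := by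
    rintro ω ⟨s, a, hsn, hsr, ha, has, hω⟩
    simp only [Set.mem_iUnion, mem_filter, Nat.mem_divisors, mem_Icc]
    exact ⟨s, ⟨⟨hsn, by nlinarith⟩, hsr⟩, a, ⟨ha, has⟩, hω⟩
  have hC : ∀ s ∈ n.divisors.filter (· * r ≤ n), ∀ a ∈ Icc 1 s, μ.real (C s a) = p ^ (n / s) := by
    intro s hs a ha
    simp only [mem_filter, Nat.mem_divisors, mem_Icc] at hs ha
    rw [measureReal_forall_eq_true hp0.le hindep hbern, card_cyc hs.1.1 ha.1 ha.2]
  calc _ ≤ ∑ s ∈ n.divisors.filter (· * r ≤ n), ∑ a ∈ Icc 1 s, μ.real (C s a) :=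
        (measureReal_mono hcover (measure_ne_top μ _)).trans <|
          (measureReal_biUnion_finset_le _ _).trans <|
            sum_le_sum fun _ _ ↦ measureReal_biUnion_finset_le _ _
    _ = ∑ s ∈ n.divisors.filter (· * r ≤ n), (s : ℝ) * p ^ (n / s) := by
        refine sum_congr rfl fun s hs ↦ ?_
        rw [sum_congr rfl (hC s hs), sum_const, Nat.card_Icc, nsmul_eq_mul]
        simp
    _ ≤ n * p ^ r / ((1 - p) * r) := sum_divisors_mul_pow_div_le hp0.le hp1 n (by omega)

/-- For i.i.d. Bernoulli(p) variables and `2 ≤ r ≤ n`, the event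
`A₂ = ⋃_{s ∣ n, s ≤ n/r, 1 ≤ a ≤ s} {ξ_i = 1 ∀ i ∈ C_{a,s}}` satisfies
`P(A₂) ≤ n pʳ/(q r)` where `q = 1 − p`. -/
theorem stmt12 {Ω : Type*} [MeasurableSpace Ω] (μ : Measure Ω) [IsProbabilityMeasure μ]
    (p : ℝ) (hp0 : 0 < p) (hp1 : p < 1) (n r : ℕ) (hr : 2 ≤ r) (hrn : r ≤ n)
    (ξ : ℕ → Ω → Bool) (hmeas : ∀ i, Measurable (ξ i))
    (hindep : iIndepFun ξ μ)
    (hbern : ∀ i, μ {ω | ξ i ω = true} = ENNReal.ofReal p) :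
    (μ {ω | ∃ s a : ℕ, s ∣ n ∧ s * r ≤ n ∧ 1 ≤ a ∧ a ≤ s ∧
        ∀ i ∈ cyc n a s, ξ i ω = true}).toReal ≤
      (n : ℝ) * p ^ r / ((1 - p) * r) :=
  stmt12_general μ p hp0 hp1 n r hr ξ hindep hbern
end

section
/- Fix 2 ≤ r ≤ n and let B̃_n = {(a,s): 1 ≤ a ≤ n, 1 ≤ s ≤ ⌊n/2⌋, gcd(n,s) < n/r}. Then n²/2 · (1 − (r+1)²/(2n)) ≤ |B̃_n| ≤ n²/2. -/
/-!
Since the condition on `(a, s)` does not involve `a`, `|B̃_n| = n · |S̃|` with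
`S̃ = {1 ≤ s ≤ ⌊n/2⌋ : gcd(n, s) < n/r}`, and the upper bound is `|S̃| ≤ n/2`. For the lower bound,
an excluded `s` has `i := n / gcd(n, s) ≤ r`, and `s = (n/i) · j` with `2 ≤ 2j ≤ i`; so at most
`∑_{i=2}^r ⌊i/2⌋ ≤ ((r+1)² - 2)/4` values of `s` are excluded.
-/

/-- `B̃_n` : pairs `(a,s)` with `1 ≤ a ≤ n`, `1 ≤ s ≤ ⌊n/2⌋` and `gcd(n,s) < n/r`. -/
def Btilde (n r : ℕ) : Finset (ℕ × ℕ) :=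
  (Finset.Icc 1 n ×ˢ Finset.Icc 1 (n / 2)).filter fun q : ℕ × ℕ => Nat.gcd n q.2 * r < n

open Finset

def Stilde (n r : ℕ) : Finset ℕ :=
  (Icc 1 (n / 2)).filter fun s => Nat.gcd n s * r < n

lemma Btilde_eq_product (n r : ℕ) : Btilde n r = Icc 1 n ×ˢ Stilde n r := by
  ext ⟨a, s⟩
  simp only [Btilde, Stilde, mem_filter, mem_product]
  tauto

lemma card_Btilde (n r : ℕ) : #(Btilde n r) = n * #(Stilde n r) := by
  simp [Btilde_eq_product, card_product]

lemma card_Stilde_le (n r : ℕ) : #(Stilde n r) ≤ n / 2 :=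
  (card_filter_le _ _).trans (by simp)

lemma filter_le_gcd_mul_subset (n r : ℕ) :
    (Icc 1 (n / 2)).filter (fun s => n ≤ Nat.gcd n s * r) ⊆
      (Icc 2 r).biUnion fun i => (Icc 1 (i / 2)).image fun j => n / i * j := by
  intro s hs
  simp only [mem_filter, mem_Icc] at hs
  obtain ⟨⟨hs1, hsn⟩, hnr⟩ := hs
  have hg : 0 < Nat.gcd n s := Nat.gcd_pos_of_pos_right n hs1
  obtain ⟨i, hi⟩ := Nat.gcd_dvd_left n s
  obtain ⟨j, hj⟩ := Nat.gcd_dvd_right n s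
  generalize Nat.gcd n s = g at *
  subst hi hj
  have hj1 : 1 ≤ j := Nat.pos_of_ne_zero (by rintro rfl; simp at hs1)
  have hji : 2 * j ≤ i := Nat.le_of_mul_le_mul_left
    (by linarith [(Nat.le_div_iff_mul_le two_pos).1 hsn]) hg
  have hir : i ≤ r := Nat.le_of_mul_le_mul_left (by linarith) hg
  simp only [mem_biUnion, mem_image, mem_Icc]
  refine ⟨i, ⟨by omega, hir⟩, j, ⟨hj1, by omega⟩, ?_⟩
  rw [Nat.mul_div_cancel _ (by omega)]

lemma card_filter_le_gcd_mul_le (n r : ℕ) :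
    #((Icc 1 (n / 2)).filter (fun s => n ≤ Nat.gcd n s * r)) ≤ ∑ i ∈ Icc 2 r, i / 2 :=
  (card_le_card (filter_le_gcd_mul_subset n r)).trans <| card_biUnion_le.trans <|
    sum_le_sum fun i _ => card_image_le.trans (by simp)

lemma four_mul_sum_Icc_two_div_two_add_two_le {r : ℕ} (hr : 1 ≤ r) :
    4 * ∑ i ∈ Icc 2 r, i / 2 + 2 ≤ (r + 1) ^ 2 := by
  induction r, hr using Nat.le_induction with
  | base => simp
  | succ r hr ih =>
    rw [sum_Icc_succ_top (by omega)]
    have := Nat.div_mul_le_self (r + 1) 2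
    nlinarith

lemma two_mul_le_four_mul_card_Stilde_add (n : ℕ) {r : ℕ} (hr : 1 ≤ r) :
    2 * n ≤ 4 * #(Stilde n r) + (r + 1) ^ 2 := by
  have hsplit := card_filter_add_card_filter_not (s := Icc 1 (n / 2))
    (fun s => Nat.gcd n s * r < n)
  simp only [not_lt, Nat.card_Icc, add_tsub_cancel_right] at hsplit
  have := card_filter_le_gcd_mul_le n r
  have := four_mul_sum_Icc_two_div_two_add_two_le hr
  unfold Stilde
  omega

theorem stmt13_general (n r : ℕ) (hr : 2 ≤ r) :
    (n : ℝ) ^ 2 / 2 * (1 - ((r : ℝ) + 1) ^ 2 / (2 * n)) ≤ ((Btilde n r).card : ℝ) ∧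
      ((Btilde n r).card : ℝ) ≤ (n : ℝ) ^ 2 / 2 := by
  have hlower : (2 * n : ℝ) ≤ 4 * #(Stilde n r) + ((r : ℝ) + 1) ^ 2 := by
    exact_mod_cast two_mul_le_four_mul_card_Stilde_add n (by omega : 1 ≤ r)
  have hupper : (#(Stilde n r) : ℝ) ≤ n / 2 := by
    rw [le_div_iff₀ two_pos]
    exact_mod_cast (Nat.mul_le_mul_right 2 (card_Stilde_le n r)).trans (Nat.div_mul_le_self n 2)
  rw [card_Btilde, Nat.cast_mul]
  constructor
  · rcases eq_or_ne n 0 with rfl | hn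
    · simp
    have : (n : ℝ) ^ 2 / 2 * (1 - ((r : ℝ) + 1) ^ 2 / (2 * n)) =
        n * (2 * n - ((r : ℝ) + 1) ^ 2) / 4 := by
      field_simp
      ring
    rw [this]
    nlinarith [(Nat.cast_nonneg n : (0 : ℝ) ≤ n)]
  · nlinarith [(Nat.cast_nonneg n : (0 : ℝ) ≤ n)]

/-- `n²/2 · (1 − (r+1)²/(2n)) ≤ |B̃_n| ≤ n²/2`. -/
theorem stmt13 (n r : ℕ) (hr : 2 ≤ r) (hrn : r ≤ n) :
    (n : ℝ) ^ 2 / 2 * (1 - ((r : ℝ) + 1) ^ 2 / (2 * n)) ≤ ((Btilde n r).card : ℝ) ∧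
      ((Btilde n r).card : ℝ) ≤ (n : ℝ) ^ 2 / 2 :=
  stmt13_general n r hr
end

section
/- Let ξ_1,…,ξ_n be i.i.d. Bernoulli(p), 0 < p < 1, q = 1−p, and 2 ≤ r ≤ n. With Ĩ = ∑_{(a,s)∈B̃_n} P(Ã_{a,s}) where Ã_{a,s} = {ξ_a = 0, ξ_{a+s mod n} = 1, …, ξ_{a+rs mod n} = 1} and B̃_n = {(a,s): 1 ≤ a ≤ n, 1 ≤ s ≤ ⌊n/2⌋, gcd(n,s) < n/r}, one has (1 − (r+1)²/(2n)) · qn²p^r/2 ≤ Ĩ ≤ qn²p^r/2. -/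
/-! Since `gcd(n, s) · r < n`, the additive order `n / gcd(n, s)` of `s` in `ℤ/nℤ` exceeds `r`, so
the indices `a, a + s, …, a + rs` are distinct mod `n` and independence gives `P(Ã_{a,s}) = q pʳ` on
all of `B̃_n`. Thus `Ĩ = |B̃_n| q pʳ` with `|B̃_n| = n · #{s ≤ ⌊n/2⌋ : gcd(n, s) · r < n}`. An excluded
`s` is `d t` with `d = gcd(n, s)`, `e = n / d ≤ r` and `t ≤ e / 2`, and `s` is recovered from
`(e, t)`; so at most `∑_{e=2}^r ⌊e/2⌋ ≤ ((r + 1)² - 2) / 4` values of `s` are excluded. -/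

open MeasureTheory ProbabilityTheory

open Finset

lemma amod_of_pos_of_le {a n : ℕ} (ha : 0 < a) (han : a ≤ n) : amod a n = a := by
  unfold amod
  rcases han.eq_or_lt with rfl | h
  · simp
  · rw [Nat.mod_eq_of_lt h]
    split_ifs <;> omega

lemma natCast_eq_of_amod_eq {n x y : ℕ} (h : amod x n = amod y n) :
    (x : ZMod n) = y := by
  rw [ZMod.natCast_eq_natCast_iff']
  unfold amod at h
  rcases n.eq_zero_or_pos with rfl | hn
  · simp only [Nat.mod_zero] at h ⊢
    split_ifs at h <;> omega
  have := Nat.mod_lt x hn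
  have := Nat.mod_lt y hn
  split_ifs at h <;> omega

lemma amod_add_mul_injOn {n s r : ℕ} (a : ℕ) (h : n.gcd s * r < n) :
    Set.InjOn (fun j => amod (a + j * s) n) (Set.Iic r) := by
  intro j hj k hk hjk
  have hn : n ≠ 0 := by rintro rfl; simp at h
  have hr : r < addOrderOf (s : ZMod n) := by
    rw [ZMod.addOrderOf_coe s hn]
    exact (Nat.lt_div_iff_mul_lt' (Nat.gcd_dvd_left n s) r).2 h
  have hcast := natCast_eq_of_amod_eq hjk
  push_cast at hcast
  refine nsmul_injOn_Iio_addOrderOf (lt_of_le_of_lt hj hr) (lt_of_le_of_lt hk hr) ?_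
  simpa [nsmul_eq_mul] using hcast

lemma Btilde_eq_product_s14 (n r : ℕ) :
    Btilde n r = Icc 1 n ×ˢ (Icc 1 (n / 2)).filter fun s => n.gcd s * r < n :=
  filter_product_right fun s => n.gcd s * r < n

lemma four_mul_sum_Icc_div_two_add_two_le {r : ℕ} (hr : 1 ≤ r) :
    4 * ∑ e ∈ Icc 2 r, e / 2 + 2 ≤ (r + 1) ^ 2 := by
  induction r, hr using Nat.le_induction with
  | base => decide
  | succ m hm ih =>
    rw [sum_Icc_succ_top (by omega)]
    have : (m + 1 + 1) ^ 2 = (m + 1) ^ 2 + 2 * m + 3 := by ring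
    omega

lemma four_mul_card_filter_le_gcd_mul_add_two_le {n r : ℕ} (hr : 1 ≤ r) :
    4 * #((Icc 1 (n / 2)).filter fun s => n ≤ n.gcd s * r) + 2 ≤ (r + 1) ^ 2 := by
  set T := (Icc 2 r).sigma fun e => Icc 1 (e / 2)
  have hcardT : #T = ∑ e ∈ Icc 2 r, e / 2 := by
    simp only [T, card_sigma, Nat.card_Icc, Nat.add_sub_cancel]
  suffices h : #((Icc 1 (n / 2)).filter fun s => n ≤ n.gcd s * r) ≤ #T by
    have := four_mul_sum_Icc_div_two_add_two_le hr
    omega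
  refine card_le_card_of_injOn (fun s => ⟨n / n.gcd s, s / n.gcd s⟩) ?_ ?_
  · intro s hs
    simp only [mem_coe, mem_filter, mem_Icc] at hs
    obtain ⟨⟨hs1, hs2⟩, hge⟩ := hs
    have hd0 : 0 < n.gcd s := Nat.gcd_pos_of_pos_right n hs1
    have hds : n.gcd s ≤ s := Nat.le_of_dvd hs1 (Nat.gcd_dvd_right n s)
    simp only [T, coe_sigma, Set.mem_sigma_iff, coe_Icc, Set.mem_Icc]
    refine ⟨⟨(Nat.le_div_iff_mul_le hd0).2 (by omega), ?_⟩, (Nat.le_div_iff_mul_le hd0).2 ?_, ?_⟩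
    · exact (Nat.div_le_iff_le_mul_add_pred hd0).2 (by nlinarith)
    · omega
    · rw [Nat.div_div_eq_div_mul, mul_comm, ← Nat.div_div_eq_div_mul]
      exact Nat.div_le_div_right hs2
  · intro s hs t ht hst
    simp only [mem_coe, mem_filter, mem_Icc] at hs ht
    have hn : n ≠ 0 := by omega
    simp only [Sigma.mk.inj_iff, heq_eq_eq] at hst
    have hgcd : n.gcd s = n.gcd t := by
      rw [← Nat.div_div_self (Nat.gcd_dvd_left n s) hn, hst.1,
        Nat.div_div_self (Nat.gcd_dvd_left n t) hn]
    rw [← Nat.div_mul_cancel (Nat.gcd_dvd_right n s), ← Nat.div_mul_cancel (Nat.gcd_dvd_right n t),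
      hst.2, hgcd]

lemma card_Btilde_s14 (n r : ℕ) :
    #(Btilde n r) = n * #((Icc 1 (n / 2)).filter fun s => n.gcd s * r < n) := by
  rw [Btilde_eq_product_s14, card_product, Nat.card_Icc, Nat.add_sub_cancel]

lemma two_mul_card_Btilde_le (n r : ℕ) : 2 * #(Btilde n r) ≤ n ^ 2 := by
  have hgood : #((Icc 1 (n / 2)).filter fun s => n.gcd s * r < n) ≤ n / 2 :=
    (card_filter_le _ _).trans (by simp)
  rw [card_Btilde_s14]
  calc 2 * (n * _) ≤ n * (2 * (n / 2)) := by nlinarith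
    _ ≤ n ^ 2 := by rw [sq]; exact Nat.mul_le_mul_left n (Nat.mul_div_le n 2)

lemma two_mul_sq_le_four_mul_card_Btilde_add {n r : ℕ} (hr : 1 ≤ r) :
    2 * n ^ 2 ≤ 4 * #(Btilde n r) + n * (r + 1) ^ 2 := by
  have hsplit := card_filter_add_card_filter_not (s := Icc 1 (n / 2))
    (fun s => n.gcd s * r < n)
  simp only [not_lt, Nat.card_Icc, Nat.add_sub_cancel] at hsplit
  have hbad := four_mul_card_filter_le_gcd_mul_add_two_le (n := n) hr
  have hfloor : n ≤ 2 * (n / 2) + 1 := by omega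
  rw [card_Btilde_s14]
  nlinarith

section Bernoulli

variable {Ω : Type*} [MeasurableSpace Ω] {μ : Measure Ω} [IsProbabilityMeasure μ] {p : ℝ}
  {ξ : ℕ → Ω → Bool}

lemma measure_eq_false_of_measure_eq_true (hp : 0 ≤ p) {i : ℕ} (hξ : Measurable (ξ i))
    (hbern : μ {ω | ξ i ω = true} = ENNReal.ofReal p) :
    μ {ω | ξ i ω = false} = ENNReal.ofReal (1 - p) := by
  have hcompl : {ω | ξ i ω = false} = {ω | ξ i ω = true}ᶜ := by ext; simp
  have htrue : MeasurableSet {ω | ξ i ω = true} := hξ (measurableSet_singleton true)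
  rw [hcompl, measure_compl htrue (measure_ne_top μ _), hbern,
    measure_univ, ENNReal.ofReal_sub 1 hp, ENNReal.ofReal_one]

lemma measure_forall_eq_false_and_forall_eq_true (hp : 0 ≤ p) (hmeas : ∀ i, Measurable (ξ i))
    (hindep : iIndepFun ξ μ) (hbern : ∀ i, μ {ω | ξ i ω = true} = ENNReal.ofReal p)
    {F T : Finset ℕ} (hFT : Disjoint F T) :
    μ {ω | (∀ i ∈ F, ξ i ω = false) ∧ ∀ j ∈ T, ξ j ω = true}
      = ENNReal.ofReal (1 - p) ^ #F * ENNReal.ofReal p ^ #T := by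
  have hset : {ω | (∀ i ∈ F, ξ i ω = false) ∧ ∀ j ∈ T, ξ j ω = true}
      = ⋂ i ∈ F ∪ T, ξ i ⁻¹' {decide (i ∈ T)} := by
    ext ω
    simp only [Set.mem_ofPred_eq, Set.mem_iInter, Set.mem_preimage, Set.mem_singleton_iff,
      mem_union]
    constructor
    · rintro ⟨hF, hT⟩ i (hi | hi)
      · simpa [disjoint_left.1 hFT hi] using hF i hi
      · simpa [hi] using hT i hi
    · intro h
      exact ⟨fun i hi => by simpa [disjoint_left.1 hFT hi] using h i (.inl hi),
        fun j hj => by simpa [hj] using h j (.inr hj)⟩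
  have hfalse : ∀ i ∈ F, μ (ξ i ⁻¹' {decide (i ∈ T)}) = ENNReal.ofReal (1 - p) := fun i hi => by
    simp only [disjoint_left.1 hFT hi, decide_false]
    exact measure_eq_false_of_measure_eq_true hp (hmeas i) (hbern i)
  have htrue : ∀ j ∈ T, μ (ξ j ⁻¹' {decide (j ∈ T)}) = ENNReal.ofReal p := fun j hj => by
    simp only [hj, decide_true]
    exact hbern j
  rw [hset, hindep.measure_inter_preimage_eq_mul _ fun _ _ => .of_discrete, prod_union hFT,
    prod_congr rfl hfalse, prod_congr rfl htrue, prod_const, prod_const]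

lemma toReal_measure_Atilde (hp0 : 0 ≤ p) (hp1 : p ≤ 1) (hmeas : ∀ i, Measurable (ξ i))
    (hindep : iIndepFun ξ μ) (hbern : ∀ i, μ {ω | ξ i ω = true} = ENNReal.ofReal p)
    {n r a s : ℕ} (ha : 0 < a) (han : a ≤ n) (hgcd : n.gcd s * r < n) :
    (μ {ω | ξ a ω = false ∧ ∀ j : ℕ, 1 ≤ j → j ≤ r → ξ (amod (a + j * s) n) ω = true}).toReal
      = (1 - p) * p ^ r := by
  set g := fun j => amod (a + j * s) n
  have hinj : Set.InjOn g (Set.Iic r) := amod_add_mul_injOn a hgcd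
  have hg0 : g 0 = a := by simp [g, amod_of_pos_of_le ha han]
  have hcard : #((Icc 1 r).image g) = r := by
    rw [card_image_of_injOn (hinj.mono fun j hj => (mem_Icc.1 hj).2), Nat.card_Icc,
      Nat.add_sub_cancel]
  have hdisj : Disjoint {a} ((Icc 1 r).image g) := by
    rw [disjoint_singleton_left, mem_image]
    rintro ⟨j, hj, hja⟩
    have := hinj (mem_Icc.1 hj).2 (Nat.zero_le r) (hja.trans hg0.symm)
    rw [mem_Icc] at hj
    omega
  have hset : {ω | ξ a ω = false ∧ ∀ j : ℕ, 1 ≤ j → j ≤ r → ξ (g j) ω = true}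
      = {ω | (∀ i ∈ ({a} : Finset ℕ), ξ i ω = false) ∧ ∀ k ∈ (Icc 1 r).image g, ξ k ω = true} := by
    ext ω
    simp only [Set.mem_ofPred_eq, mem_singleton, forall_eq, forall_mem_image, mem_Icc, and_imp]
  rw [hset, measure_forall_eq_false_and_forall_eq_true hp0 hmeas hindep hbern hdisj, hcard,
    card_singleton, pow_one, ENNReal.toReal_mul, ENNReal.toReal_pow, ENNReal.toReal_ofReal hp0,
    ENNReal.toReal_ofReal (by linarith)]

end Bernoulli

/-- For i.i.d. Bernoulli(p) and `2 ≤ r ≤ n`, with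
`Ĩ = ∑_{(a,s)∈B̃_n} P(Ã_{a,s})` where
`Ã_{a,s} = {ξ_a = 0, ξ_{a+s mod n} = 1, …, ξ_{a+rs mod n} = 1}`, one has
`(1 − (r+1)²/(2n)) · qn²pʳ/2 ≤ Ĩ ≤ qn²pʳ/2`, `q = 1 − p`. -/
theorem stmt14 {Ω : Type*} [MeasurableSpace Ω] (μ : Measure Ω) [IsProbabilityMeasure μ]
    (p : ℝ) (hp0 : 0 < p) (hp1 : p < 1) (n r : ℕ) (hr : 2 ≤ r) (hrn : r ≤ n)
    (ξ : ℕ → Ω → Bool) (hmeas : ∀ i, Measurable (ξ i))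
    (hindep : iIndepFun ξ μ)
    (hbern : ∀ i, μ {ω | ξ i ω = true} = ENNReal.ofReal p) :
    (1 - ((r : ℝ) + 1) ^ 2 / (2 * n)) * ((1 - p) * (n : ℝ) ^ 2 * p ^ r / 2) ≤
      (∑ q ∈ Btilde n r,
        (μ {ω | ξ q.1 ω = false ∧
            ∀ j : ℕ, 1 ≤ j → j ≤ r → ξ (amod (q.1 + j * q.2) n) ω = true}).toReal) ∧
    (∑ q ∈ Btilde n r,
        (μ {ω | ξ q.1 ω = false ∧
            ∀ j : ℕ, 1 ≤ j → j ≤ r → ξ (amod (q.1 + j * q.2) n) ω = true}).toReal) ≤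
      (1 - p) * (n : ℝ) ^ 2 * p ^ r / 2 := by
  have hterm : ∀ q ∈ Btilde n r,
      (μ {ω | ξ q.1 ω = false ∧
        ∀ j : ℕ, 1 ≤ j → j ≤ r → ξ (amod (q.1 + j * q.2) n) ω = true}).toReal
      = (1 - p) * p ^ r := by
    rintro ⟨a, s⟩ hq
    simp only [Btilde, mem_filter, mem_product, mem_Icc] at hq
    exact toReal_measure_Atilde hp0.le hp1.le hmeas hindep hbern hq.1.1.1 hq.1.1.2 hq.2
  rw [sum_congr rfl hterm, sum_const, nsmul_eq_mul]
  have hupper : 2 * (#(Btilde n r) : ℝ) ≤ n ^ 2 := by exact_mod_cast two_mul_card_Btilde_le n r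
  have hlower : 2 * (n : ℝ) ^ 2 ≤ 4 * #(Btilde n r) + n * (r + 1) ^ 2 := by
    exact_mod_cast two_mul_sq_le_four_mul_card_Btilde_add (n := n) (by omega)
  have hn : (n : ℝ) ≠ 0 := by norm_cast; omega
  have hc : 0 ≤ (1 - p) * p ^ r := mul_nonneg (by linarith) (pow_nonneg hp0.le r)
  constructor
  · calc (1 - ((r : ℝ) + 1) ^ 2 / (2 * n)) * ((1 - p) * (n : ℝ) ^ 2 * p ^ r / 2)
        = (2 * (n : ℝ) ^ 2 - n * (r + 1) ^ 2) / 4 * ((1 - p) * p ^ r) := by field_simp; ring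
      _ ≤ #(Btilde n r) * ((1 - p) * p ^ r) := by gcongr; linarith
  · calc (#(Btilde n r) : ℝ) * ((1 - p) * p ^ r) ≤ (n : ℝ) ^ 2 / 2 * ((1 - p) * p ^ r) := by
          gcongr; linarith
      _ = (1 - p) * (n : ℝ) ^ 2 * p ^ r / 2 := by ring
end

section
/- Let m, n, r_m, r_n be positive integers with n ≥ 2m, r_n ≥ 36, and t an integer with 3n/r_n < t ≤ ⌊n/2⌋. For any (a,s) ∈ B̃_m^{(r_m)} and any b with 1 ≤ b ≤ n, the set B̃^{(m,r_m)}_{a,s} = {a, a+s mod m, …, a+r_m·s mod m} ⊆ {1,…,m} and the set B̃^{(n,r_n)}_{b,t} = {b, b+t mod n, …, b+r_n·t mod n} satisfy |B̃^{(m,r_m)}_{a,s} ∩ B̃^{(n,r_n)}_{b,t}| < (3/4)·r_n. -/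
def progModSet (n r a s : ℕ) : Finset ℕ :=
  (Finset.range (r + 1)).image fun j => amod (a + j * s) n

lemma amod_bounds (x n : ℕ) (hn : 1 ≤ n) : 1 ≤ amod x n ∧ amod x n ≤ n := by
  unfold amod
  split_ifs with h
  · exact ⟨hn, le_rfl⟩
  · have h1 : x % n < n := Nat.mod_lt x hn
    omega

lemma amod_eq_of_pos (x n : ℕ) (hx : 1 ≤ x) (hn : 1 ≤ n) :
    amod x n = (x - 1) % n + 1 := by
  obtain ⟨k, r, hr, hxe⟩ : ∃ k r, r < n ∧ x = n * k + r :=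
    ⟨x / n, x % n, Nat.mod_lt x hn, (Nat.div_add_mod x n).symm⟩
  subst hxe
  unfold amod
  rw [Nat.mul_add_mod, Nat.mod_eq_of_lt hr]
  split_ifs with h
  · subst h
    cases k with
    | zero => omega
    | succ k' =>
      have h1 : n * (k' + 1) + 0 - 1 = n * k' + (n - 1) := by
        have : n * (k' + 1) = n * k' + n := by ring
        omega
      rw [h1, Nat.mul_add_mod, Nat.mod_eq_of_lt (by omega)]
      omega
  · have h1 : n * k + r - 1 = n * k + (r - 1) := by omega
    rw [h1, Nat.mul_add_mod, Nat.mod_eq_of_lt (by omega)]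
    omega

lemma arith_core (q γ w B rn : ℕ) (hq : 1 ≤ q) (hγ : 1 ≤ γ) (hγq : q ≤ γ + 1)
    (hw : w = q + γ) (h3w : 3 * w ≤ rn + 2) (hrn : 36 ≤ rn)
    (hBw : B * w ≤ rn + w) (hB : 1 ≤ B) : 4 * (B * q) < 3 * rn := by
  have hCw : (B - 1) * w ≤ rn := by
    have h1 : (B - 1) * w = B * w - 1 * w := by rw [Nat.sub_mul]
    omega
  rcases eq_or_lt_of_le hq with hq1 | hq2
  · subst hq1
    have h2 : B * 2 ≤ B * w := Nat.mul_le_mul_left B (by omega)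
    omega
  · have hD : (B - 1) * (2 * q - 1) ≤ rn := by
      calc (B - 1) * (2 * q - 1) ≤ (B - 1) * w := Nat.mul_le_mul_left _ (by omega)
        _ ≤ rn := hCw
    have hrn6 : 6 * q ≤ rn + 5 := by omega
    rcases le_or_gt q 7 with hq7 | hq8
    · interval_cases q <;> omega
    · have hq8' : (8 : ℤ) ≤ (q : ℤ) := by exact_mod_cast hq8
      have hrn6' : 6 * (q : ℤ) ≤ (rn : ℤ) + 5 := by exact_mod_cast hrn6
      have hrn' : (36 : ℤ) ≤ (rn : ℤ) := by exact_mod_cast hrn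
      have hB' : (1 : ℤ) ≤ (B : ℤ) := by exact_mod_cast hB
      have hD' : ((B : ℤ) - 1) * (2 * (q : ℤ) - 1) ≤ (rn : ℤ) := by
        zify [hB, show 1 ≤ 2 * q by omega] at hD
        linarith [hD]
      have goal' : 4 * ((B : ℤ) * (q : ℤ)) < 3 * (rn : ℤ) := by
        have h2q1 : (0 : ℤ) < 2 * (q : ℤ) - 1 := by linarith
        have h1 : 4 * (q : ℤ) * (((B : ℤ) - 1) * (2 * (q : ℤ) - 1)) ≤ 4 * (q : ℤ) * (rn : ℤ) :=
          mul_le_mul_of_nonneg_left hD' (by linarith)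
        have h2 : (2 * (q : ℤ) - 3) * (6 * (q : ℤ) - 5) ≤ (2 * (q : ℤ) - 3) * (rn : ℤ) :=
          mul_le_mul_of_nonneg_left (by linarith) (by linarith)
        nlinarith [h1, h2, mul_nonneg (by linarith : (0:ℤ) ≤ (q:ℤ) - 8) (by linarith : (0:ℤ) ≤ (q:ℤ))]
      exact_mod_cast goal'

/-- Lemma 4.4: if `n ≥ 2m`, `rₙ ≥ 36` and `3n/rₙ < t ≤ ⌊n/2⌋`, then for any
`(a,s) ∈ B̃_m^{(r_m)}` and `1 ≤ b ≤ n`,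
`|B̃^{(m,r_m)}_{a,s} ∩ B̃^{(n,rₙ)}_{b,t}| < (3/4)·rₙ`. -/
theorem stmt16 (m n rm rn a s b t : ℕ)
    (hm : 1 ≤ m) (hnm : 2 * m ≤ n) (hrn : 36 ≤ rn)
    (ht1 : 3 * n < t * rn) (ht2 : t ≤ n / 2)
    (ha : 1 ≤ a ∧ a ≤ m) (hs : 1 ≤ s ∧ 2 * s ≤ m) (hgcd : Nat.gcd m s * rm < m)
    (hb : 1 ≤ b ∧ b ≤ n) :
    ((progModSet m rm a s ∩ progModSet n rn b t).card : ℝ) < 3 / 4 * rn := by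
  obtain ⟨hb1, hb2⟩ := hb
  have hn2 : 2 ≤ n := le_trans (by omega) hnm
  have hn0 : 1 ≤ n := by omega
  have ht0 : 1 ≤ t := by
    rcases Nat.eq_zero_or_pos t with h | h
    · subst h; simp at ht1
    · exact h
  have htn : 2 * t ≤ n := by
    have := (Nat.le_div_iff_mul_le (by norm_num : 0 < 2)).mp ht2
    omega
  -- the hit counter
  set c : ℕ → ℕ := fun j => (b - 1 + j * t) % n with hc
  set q : ℕ := (m - 1) / t + 1 with hqdef
  set γ : ℕ := (n - m) / t with hγdef
  set w : ℕ := q + γ with hwdef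
  set B : ℕ := (rn + w) / w with hBdef
  have hq1 : 1 ≤ q := by
    rw [hqdef]
    exact Nat.succ_le_succ (Nat.zero_le _)
  have hγ1 : 1 ≤ γ := by
    rw [hγdef]
    rw [Nat.one_le_div_iff ht0]
    omega
  have hdm := Nat.div_add_mod (m - 1) t
  have hmm := Nat.mod_lt (m - 1) ht0
  have hqt_ge : m ≤ q * t := by
    have h2 : q * t = t * ((m - 1) / t) + t := by rw [hqdef]; ring
    omega
  have hqt_le : q * t ≤ m - 1 + t := by
    have h2 : q * t = t * ((m - 1) / t) + t := by rw [hqdef]; ring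
    omega
  have hγt_le : γ * t ≤ n - m := Nat.div_mul_le_self _ _
  have hγq : q ≤ γ + 1 := by
    have h1 : (m - 1) / t ≤ (n - m) / t := Nat.div_le_div_right (by omega)
    omega
  have hw2 : 2 ≤ w := by omega
  have h3w : 3 * w ≤ rn + 2 := by
    have h1 : w * t = q * t + γ * t := by rw [hwdef]; ring
    have h2 : w * t ≤ n + t - 1 := by omega
    have h3 : t * (3 * w) < t * (rn + 3) := by
      have e1 : t * (3 * w) = 3 * (w * t) := by ring
      have e2 : t * (rn + 3) = t * rn + 3 * t := by ring
      omega
    have h4 : 3 * w < rn + 3 := Nat.lt_of_mul_lt_mul_left h3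
    omega
  have hBw : B * w ≤ rn + w := Nat.div_mul_le_self _ _
  have hB1 : 1 ≤ B := by
    rw [hBdef, Nat.one_le_div_iff (by omega)]
    omega
  have hBw2 : rn + 1 ≤ B * w := by
    have h1 := Nat.div_add_mod (rn + w) w
    have h2 : (rn + w) % w < w := Nat.mod_lt _ (by omega)
    have h3 : w * B = B * w := by ring
    rw [hBdef] at h3 ⊢
    omega
  -- step lemma
  have hstep : ∀ j, c j < m → c (j + 1) = c j + t := by
    intro j hj
    have hj' : (b - 1 + j * t) % n < m := hj
    have h1 : b - 1 + (j + 1) * t = (b - 1 + j * t) + t := by ring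
    show (b - 1 + (j + 1) * t) % n = (b - 1 + j * t) % n + t
    rw [h1, ← Nat.mod_add_mod]
    exact Nat.mod_eq_of_lt (by omega)
  -- chain lemma
  have hchain : ∀ i j, (∀ k, k < i → c (j + k) < m) → c (j + i) = c j + i * t := by
    intro i
    induction i with
    | zero => intro j _; simp
    | succ i ih =>
      intro j hk
      have h1 : c (j + i) = c j + i * t := ih j (fun k hk' => hk k (by omega))
      have h2 : c (j + i) < m := hk i (by omega)
      have h3 : c (j + i + 1) = c (j + i) + t := hstep _ h2
      have h4 : j + (i + 1) = j + i + 1 := by omega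
      rw [h4, h3, h1]
      ring
  -- no q+1 consecutive hits
  have hF1 : ∀ j, ¬ (∀ i, i ≤ q → c (j + i) < m) := by
    intro j h
    have h1 : c (j + q) = c j + q * t := hchain q j (fun k hk => h k (le_of_lt hk))
    have h2 := h q le_rfl
    omega
  -- gap lemma
  have hF2 : ∀ j1 j2, c j1 < m → c j2 < m → j1 + 2 ≤ j2 → j2 ≤ j1 + γ →
      (∀ p, j1 < p → p < j2 → ¬ c p < m) → False := by
    intro j1 j2 hj1 hj2 hlt hle hmiss
    have hm1 : ¬ c (j1 + 1) < m := hmiss (j1 + 1) (by omega) (by omega)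
    have h1 : c (j1 + 1) = c j1 + t := hstep j1 hj1
    set G : ℕ := j2 - j1 - 1 with hGdef
    have hG1 : 1 ≤ G := by omega
    have hj2eq : b - 1 + j2 * t = (b - 1 + (j1 + 1) * t) + G * t := by
      have h2 : j2 = j1 + 1 + G := by omega
      rw [h2]; ring
    have h2 : c j2 = (c (j1 + 1) + G * t) % n := by
      show (b - 1 + j2 * t) % n = _
      rw [hj2eq]
      exact (Nat.mod_add_mod _ n _).symm
    set Z : ℕ := c (j1 + 1) + G * t with hZdef
    rcases Nat.lt_or_ge Z n with hZ | hZ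
    · rw [Nat.mod_eq_of_lt hZ] at h2
      omega
    · have h3 := Nat.mod_add_div Z n
      have h4 : 1 ≤ Z / n := by
        rw [Nat.one_le_div_iff (by omega)]; exact hZ
      have h5 : n * 1 ≤ n * (Z / n) := Nat.mul_le_mul_left n h4
      -- so Z % n + n ≤ Z, i.e. c j2 + n ≤ Z
      have h6 : G * t + m + t ≥ n + 1 := by omega
      have h7 : G ≤ γ - 1 := by omega
      have h8 : G * t ≤ (γ - 1) * t := Nat.mul_le_mul_right t h7
      have h9 : (γ - 1) * t = γ * t - 1 * t := by rw [Nat.sub_mul]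
      omega
  -- window lemma
  have hwin : ∀ j0, ((Finset.Ico j0 (j0 + w)).filter (fun j => c j < m)).card ≤ q := by
    intro j0
    by_contra hcon
    push_neg at hcon
    set Sw := (Finset.Ico j0 (j0 + w)).filter (fun j => c j < m) with hSw
    have hne : Sw.Nonempty := Finset.card_pos.mp (by omega)
    set A := Sw.min' hne with hA
    set Bx := Sw.max' hne with hBx
    have hAmem : A ∈ Sw := Finset.min'_mem _ _
    have hBmem : Bx ∈ Sw := Finset.max'_mem _ _
    have hAw : j0 ≤ A ∧ A < j0 + w := by
      have := Finset.mem_filter.mp hAmem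
      exact Finset.mem_Ico.mp this.1
    have hBw' : j0 ≤ Bx ∧ Bx < j0 + w := by
      have := Finset.mem_filter.mp hBmem
      exact Finset.mem_Ico.mp this.1
    have hAhit : c A < m := (Finset.mem_filter.mp hAmem).2
    have hBhit : c Bx < m := (Finset.mem_filter.mp hBmem).2
    have hall : ∀ p, A ≤ p → p ≤ Bx → c p < m := by
      intro p hp1 hp2
      by_contra hpm
      have hpA : A < p := by
        rcases eq_or_lt_of_le hp1 with h | h
        · exact absurd (h ▸ hAhit) hpm
        · exact h
      have hpB : p < Bx := by
        rcases eq_or_lt_of_le hp2 with h | h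
        · exact absurd (h ▸ hBhit) hpm
        · exact h
      set S1 := Sw.filter (fun x => x < p) with hS1
      have hS1ne : S1.Nonempty := ⟨A, Finset.mem_filter.mpr ⟨hAmem, hpA⟩⟩
      set j1 := S1.max' hS1ne with hj1def
      set S2 := Sw.filter (fun x => p < x) with hS2
      have hS2ne : S2.Nonempty := ⟨Bx, Finset.mem_filter.mpr ⟨hBmem, hpB⟩⟩
      set j2 := S2.min' hS2ne with hj2def
      have hj1mem : j1 ∈ Sw ∧ j1 < p := by
        have := Finset.mem_filter.mp (Finset.max'_mem S1 hS1ne)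
        exact this
      have hj2mem : j2 ∈ Sw ∧ p < j2 := by
        have := Finset.mem_filter.mp (Finset.min'_mem S2 hS2ne)
        exact this
      have hj1w : j0 ≤ j1 ∧ j1 < j0 + w :=
        Finset.mem_Ico.mp (Finset.mem_filter.mp hj1mem.1).1
      have hj2w : j0 ≤ j2 ∧ j2 < j0 + w :=
        Finset.mem_Ico.mp (Finset.mem_filter.mp hj2mem.1).1
      have hbetween : ∀ i, j1 < i → i < j2 → ¬ c i < m := by
        intro i hi1 hi2 hih
        have hiw : i ∈ Sw := Finset.mem_filter.mpr
          ⟨Finset.mem_Ico.mpr ⟨by omega, by omega⟩, hih⟩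
        rcases lt_trichotomy i p with h | h | h
        · have : i ∈ S1 := Finset.mem_filter.mpr ⟨hiw, h⟩
          have := Finset.le_max' S1 i this
          omega
        · exact hpm (h ▸ hih)
        · have : i ∈ S2 := Finset.mem_filter.mpr ⟨hiw, h⟩
          have := Finset.min'_le S2 i this
          omega
      have hdisj : Disjoint Sw (Finset.Ioo j1 j2) := by
        rw [Finset.disjoint_left]
        intro x hx hx2
        have hx3 := Finset.mem_Ioo.mp hx2
        exact hbetween x hx3.1 hx3.2 (Finset.mem_filter.mp hx).2
      have hsub2 : Sw ∪ Finset.Ioo j1 j2 ⊆ Finset.Ico j0 (j0 + w) := by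
        apply Finset.union_subset (Finset.filter_subset _ _)
        intro x hx
        have hx3 := Finset.mem_Ioo.mp hx
        exact Finset.mem_Ico.mpr ⟨by omega, by omega⟩
      have hcard : Sw.card + (j2 - j1 - 1) ≤ w := by
        have h := Finset.card_le_card hsub2
        rw [Finset.card_union_of_disjoint hdisj, Nat.card_Ioo, Nat.card_Ico] at h
        omega
      exact hF2 j1 j2 (Finset.mem_filter.mp hj1mem.1).2 (Finset.mem_filter.mp hj2mem.1).2
        (by omega) (by omega) hbetween
    have hsubIcc : Sw ⊆ Finset.Icc A Bx := fun x hx =>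
      Finset.mem_Icc.mpr ⟨Finset.min'_le _ _ hx, Finset.le_max' _ _ hx⟩
    have hBA : A + q ≤ Bx := by
      have h := Finset.card_le_card hsubIcc
      rw [Nat.card_Icc] at h
      omega
    exact hF1 A (fun i hi => hall (A + i) (by omega) (by omega))
  -- total count
  set H := (Finset.range (rn + 1)).filter (fun j => c j < m) with hH
  have hHle : H.card ≤ B * q := by
    have hsub : H ⊆ (Finset.range B).biUnion
        (fun i => (Finset.Ico (i * w) (i * w + w)).filter (fun j => c j < m)) := by
      intro j hj
      rw [hH, Finset.mem_filter, Finset.mem_range] at hj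
      rw [Finset.mem_biUnion]
      refine ⟨j / w, Finset.mem_range.mpr ?_, ?_⟩
      · exact (Nat.div_lt_iff_lt_mul (by omega)).mpr (by omega)
      · rw [Finset.mem_filter, Finset.mem_Ico]
        have h1 : j / w * w ≤ j := Nat.div_mul_le_self j w
        have h2 := Nat.div_add_mod j w
        have h3 : j % w < w := Nat.mod_lt j (by omega)
        have h4 : w * (j / w) = j / w * w := by ring
        exact ⟨⟨h1, by omega⟩, hj.2⟩
    calc H.card ≤ ((Finset.range B).biUnion
        (fun i => (Finset.Ico (i * w) (i * w + w)).filter (fun j => c j < m))).card :=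
          Finset.card_le_card hsub
      _ ≤ ∑ i ∈ Finset.range B,
          ((Finset.Ico (i * w) (i * w + w)).filter (fun j => c j < m)).card :=
          Finset.card_biUnion_le
      _ ≤ ∑ _i ∈ Finset.range B, q := Finset.sum_le_sum (fun i _ => hwin (i * w))
      _ = B * q := by rw [Finset.sum_const, Finset.card_range, smul_eq_mul]
  -- intersection is within the image of H
  have hinter : (progModSet m rm a s ∩ progModSet n rn b t).card ≤ H.card := by
    have hsub : progModSet m rm a s ∩ progModSet n rn b t ⊆
        H.image (fun j => amod (b + j * t) n) := by
      intro v hv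
      rw [Finset.mem_inter] at hv
      obtain ⟨hv1, hv2⟩ := hv
      -- v ∈ [1, m]
      obtain ⟨j', hj', hvj'⟩ := Finset.mem_image.mp hv1
      have hvm : 1 ≤ v ∧ v ≤ m := hvj' ▸ amod_bounds _ m hm
      obtain ⟨j, hj, hvj⟩ := Finset.mem_image.mp hv2
      rw [Finset.mem_image]
      refine ⟨j, ?_, hvj⟩
      rw [hH, Finset.mem_filter]
      refine ⟨hj, ?_⟩
      have he : amod (b + j * t) n = (b + j * t - 1) % n + 1 :=
        amod_eq_of_pos _ _ (by omega) hn0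
      have he2 : b + j * t - 1 = b - 1 + j * t := by omega
      rw [he2] at he
      show (b - 1 + j * t) % n < m
      omega
    calc (progModSet m rm a s ∩ progModSet n rn b t).card
        ≤ (H.image (fun j => amod (b + j * t) n)).card := Finset.card_le_card hsub
      _ ≤ H.card := Finset.card_image_le
  -- final arithmetic
  have hfinal : 4 * (B * q) < 3 * rn := arith_core q γ w B rn hq1 hγ1 hγq hwdef h3w hrn hBw hB1
  have hcard : 4 * (progModSet m rm a s ∩ progModSet n rn b t).card < 3 * rn := by omega
  have hcast : (4 : ℝ) * ((progModSet m rm a s ∩ progModSet n rn b t).card : ℝ) < 3 * rn := by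
    exact_mod_cast hcard
  linarith
end

section
/- Let x, t, k, m, n be positive integers with 1 ≤ x ≤ m, n ≥ 2m, and suppose A = {x, x+t, …, x+kt} ⊆ {1,…,n} with x+(k+1)t > n. If k ≥ 1, then |A ∩ {1,…,m}| ≤ (2/3)·|A|. -/
/-- If `1 ≤ x ≤ m`, `n ≥ 2m`, `A = {x, x+t, …, x+kt} ⊆ {1,…,n}` with
`x+(k+1)t > n` and `k ≥ 1`, then `|A ∩ {1,…,m}| ≤ (2/3)|A|`. -/
theorem stmt17 (x t k m n : ℕ) (hx : 1 ≤ x) (hxm : x ≤ m) (ht : 1 ≤ t)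
    (hk : 1 ≤ k) (hmn : 2 * m ≤ n)
    (hA : x + k * t ≤ n) (hnext : n < x + (k + 1) * t) :
    ((((Finset.range (k + 1)).image fun i => x + i * t) ∩ Finset.Icc 1 m).card : ℝ)
      ≤ 2 / 3 * (((Finset.range (k + 1)).image fun i => x + i * t).card : ℝ) := by
  set A := (Finset.range (k + 1)).image fun i => x + i * t with hAdef
  have hinj : Set.InjOn (fun i => x + i * t) (Finset.range (k + 1)) := by
    intro a _ b _ h
    simp only at h
    exact Nat.eq_of_mul_eq_mul_right (by omega) (by omega : a * t = b * t)
  have hcardA : A.card = k + 1 := by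
    rw [hAdef, Finset.card_image_of_injOn hinj, Finset.card_range]
  set q := (m - x) / t with hqdef
  have hsub : A ∩ Finset.Icc 1 m ⊆ (Finset.range (q + 1)).image fun i => x + i * t := by
    intro a ha
    simp only [hAdef, Finset.mem_inter, Finset.mem_image, Finset.mem_range,
      Finset.mem_Icc] at ha ⊢
    obtain ⟨⟨i, hi, rfl⟩, _, him⟩ := ha
    refine ⟨i, ?_, rfl⟩
    have h1 : i * t ≤ m - x := by omega
    have h2 : i ≤ q := (Nat.le_div_iff_mul_le (by omega)).mpr h1
    omega
  have hcard_inter : (A ∩ Finset.Icc 1 m).card ≤ q + 1 := by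
    calc (A ∩ Finset.Icc 1 m).card
        ≤ ((Finset.range (q + 1)).image fun i => x + i * t).card :=
          Finset.card_le_card hsub
      _ ≤ q + 1 := by
          simpa using Finset.card_image_le (s := Finset.range (q + 1))
            (f := fun i => x + i * t)
  have hqt : q * t ≤ m - x := Nat.div_mul_le_self _ _
  have hlt : (2 * q) * t < (k + 1) * t := by
    have : (2 * q) * t = 2 * (q * t) := by ring
    omega
  have h2q : 2 * q < k + 1 := Nat.lt_of_mul_lt_mul_right hlt
  have h3 : 3 * (A ∩ Finset.Icc 1 m).card ≤ 2 * (k + 1) := by omega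
  rw [hcardA]
  have := (Nat.cast_le (α := ℝ)).mpr h3
  push_cast at this ⊢
  linarith
end
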